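/- arXiv:1301.5373 — 7 statements merged into one kernel-verified Lean document; each statement's English description precedes it below -/
import Mathlib

section
/- Let f be of monostable type: f is C¹ with f(0)=f(1)=0, f'(0)>0, f'(1)<0, and (1−u)f(u)>0 for u>0, u≠1. For ω ∈ (0, ω⁰) where ω⁰ = √(2∫₀¹ f(s)ds), define q^ω ∈ (0,1) by ω² = 2∫₀^{q^ω} f(s)ds and z^ω = ∫₀^{q^ω} dr/√(2∫_r^{q^ω} f(s)ds). Then z^ω → π/(2√(f'(0))) as ω → 0⁺. -/
open Real Set Filter intervalIntegral

private lemma aux_rpow (x : ℝ) (hx : 0 ≤ x) : x ^ (-(1:ℝ)/2) = (Real.sqrt x)⁻¹ := by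
  rw [Real.sqrt_eq_rpow, ← Real.rpow_neg hx]
  norm_num

private lemma auxA (q : ℝ) (hq : 0 < q) :
    IntervalIntegrable (fun r => 1 / Real.sqrt (q ^ 2 - r ^ 2)) MeasureTheory.volume 0 q := by
  have h1 : IntervalIntegrable (fun x : ℝ => x ^ (-(1:ℝ)/2)) MeasureTheory.volume 0 q :=
    intervalIntegral.intervalIntegrable_rpow' (by norm_num)
  have h2 : IntervalIntegrable (fun x : ℝ => (q - x) ^ (-(1:ℝ)/2)) MeasureTheory.volume 0 q := by
    have := h1.comp_sub_left q
    simpa using this.symm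
  have h3 : IntervalIntegrable (fun r : ℝ => q ^ (-(1:ℝ)/2) * (q - r) ^ (-(1:ℝ)/2))
      MeasureTheory.volume 0 q := h2.const_mul _
  apply h3.mono_fun
  · apply Measurable.aestronglyMeasurable
    simp only [one_div]
    exact (Real.continuous_sqrt.comp (by continuity)).measurable.inv
  · rw [Filter.EventuallyLE, MeasureTheory.ae_restrict_iff' measurableSet_uIoc]
    filter_upwards with r hr
    rw [Set.uIoc_of_le hq.le] at hr
    have hr0 : 0 < r := hr.1
    have hrq : r ≤ q := hr.2
    have hnn : (0:ℝ) ≤ 1 / Real.sqrt (q ^ 2 - r ^ 2) := by positivity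
    have hnn2 : (0:ℝ) ≤ q ^ (-(1:ℝ)/2) * (q - r) ^ (-(1:ℝ)/2) :=
      mul_nonneg (Real.rpow_nonneg hq.le _) (Real.rpow_nonneg (by linarith) _)
    rw [Real.norm_eq_abs, Real.norm_eq_abs, abs_of_nonneg hnn, abs_of_nonneg hnn2]
    have key : q ^ (-(1:ℝ)/2) * (q - r) ^ (-(1:ℝ)/2)
        = 1 / (Real.sqrt q * Real.sqrt (q - r)) := by
      rw [aux_rpow q hq.le, aux_rpow (q - r) (by linarith), one_div, mul_inv]
    rw [key]
    rcases eq_or_lt_of_le hrq with h | h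
    · simp [h]
    · have hle : q * (q - r) ≤ q ^ 2 - r ^ 2 := by nlinarith
      have hsq := Real.sqrt_le_sqrt hle
      rw [Real.sqrt_mul hq.le] at hsq
      exact one_div_le_one_div_of_le
        (mul_pos (Real.sqrt_pos.mpr hq) (Real.sqrt_pos.mpr (by linarith))) hsq

private lemma auxB (q : ℝ) (hq : 0 < q) :
    ∫ r in (0:ℝ)..q, 1 / Real.sqrt (q ^ 2 - r ^ 2) = π / 2 := by
  have hF : ∀ r ∈ Ioo 0 q, HasDerivAt (fun r => Real.arcsin (r / q))
      (1 / Real.sqrt (q ^ 2 - r ^ 2)) r := by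
    intro r hr
    have h1 : r / q ≠ -1 := by
      have : 0 < r / q := div_pos hr.1 hq
      linarith
    have h2 : r / q ≠ 1 := by
      have : r / q < 1 := (div_lt_one hq).mpr hr.2
      linarith
    have hd := (Real.hasDerivAt_arcsin h1 h2).comp r ((hasDerivAt_id r).div_const q)
    refine hd.congr_deriv ?_
    have hpos : 0 < q ^ 2 - r ^ 2 := by nlinarith [hr.1, hr.2]
    have he : 1 - (r / q) ^ 2 = (q ^ 2 - r ^ 2) / q ^ 2 := by field_simp
    rw [he, Real.sqrt_div hpos.le, Real.sqrt_sq hq.le]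
    have hs : Real.sqrt (q ^ 2 - r ^ 2) ≠ 0 := (Real.sqrt_pos.mpr hpos).ne'
    field_simp
  rw [intervalIntegral.integral_eq_sub_of_hasDerivAt_of_le hq.le
      ((Real.continuous_arcsin.comp (continuous_id.div_const q)).continuousOn) hF (auxA q hq)]
  simp [div_self hq.ne', Real.arcsin_one]

private lemma aux_rw (c q : ℝ) (hc : 0 < c) : (fun r : ℝ => 1 / Real.sqrt (c * (q ^ 2 - r ^ 2)))
    = fun r => (Real.sqrt c)⁻¹ * (1 / Real.sqrt (q ^ 2 - r ^ 2)) := by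
  funext r
  rw [Real.sqrt_mul hc.le, one_div, mul_inv, one_div]

private lemma auxC_int (c q : ℝ) (hc : 0 < c) (hq : 0 < q) :
    IntervalIntegrable (fun r => 1 / Real.sqrt (c * (q ^ 2 - r ^ 2))) MeasureTheory.volume 0 q := by
  rw [aux_rw c q hc]
  exact (auxA q hq).const_mul _

private lemma auxC (c q : ℝ) (hc : 0 < c) (hq : 0 < q) :
    ∫ r in (0:ℝ)..q, 1 / Real.sqrt (c * (q ^ 2 - r ^ 2)) = π / (2 * Real.sqrt c) := by
  rw [aux_rw c q hc, intervalIntegral.integral_const_mul, auxB q hq, mul_comm,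
    ← div_eq_mul_inv, div_div]

set_option maxHeartbeats 1000000 in
/-- For monostable `f`, the length `z^ω` of the stationary wave of `q'' + f(q) = 0`
from `0` to its maximum `q^ω` tends to `π/(2√(f'(0)))` as `ω → 0⁺`. -/
theorem stmt_2 (f : ℝ → ℝ) (hf : ContDiff ℝ 1 f)
    (hf0 : f 0 = 0) (hf1 : f 1 = 0)
    (hf'0 : 0 < deriv f 0) (hf'1 : deriv f 1 < 0)
    (hfsign : ∀ u : ℝ, 0 < u → u ≠ 1 → (1 - u) * f u > 0)
    (ω0 : ℝ) (hω0 : ω0 = Real.sqrt (2 * ∫ s in (0:ℝ)..1, f s))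
    (qω zω : ℝ → ℝ)
    (hqω : ∀ ω ∈ Ioo 0 ω0, qω ω ∈ Ioo (0:ℝ) 1 ∧
        ω ^ 2 = 2 * ∫ s in (0:ℝ)..(qω ω), f s)
    (hzω : ∀ ω ∈ Ioo 0 ω0,
        zω ω = ∫ r in (0:ℝ)..(qω ω),
          1 / Real.sqrt (2 * ∫ s in r..(qω ω), f s)) :
    Tendsto zω (nhdsWithin 0 (Ioi 0))
      (nhds (Real.pi / (2 * Real.sqrt (deriv f 0)))) := by
  set α := deriv f 0 with hα
  set L := π / (2 * Real.sqrt α) with hL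
  have hfc : Continuous f := hf.continuous
  have hfpos : ∀ u ∈ Ioo (0:ℝ) 1, 0 < f u := by
    intro u hu
    have h := hfsign u hu.1 (ne_of_lt hu.2)
    nlinarith [hu.2]
  have hfnn : ∀ u ∈ Icc (0:ℝ) 1, 0 ≤ f u := by
    intro u hu
    rcases eq_or_lt_of_le hu.1 with h | h
    · simp [← h, hf0]
    rcases eq_or_lt_of_le hu.2 with h1 | h1
    · simp [h1, hf1]
    exact (hfpos u ⟨h, h1⟩).le
  have hI1 : 0 < ∫ s in (0:ℝ)..1, f s :=
    intervalIntegral.intervalIntegral_pos_of_pos_on (hfc.intervalIntegrable _ _)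
      (fun x hx => hfpos x hx) one_pos
  have hω0pos : 0 < ω0 := by
    rw [hω0]
    exact Real.sqrt_pos.mpr (by linarith)
  rw [Metric.tendsto_nhdsWithin_nhds]
  intro ε' hε'
  -- continuity of x ↦ π / (2 √x) at α
  have hg : ContinuousAt (fun x : ℝ => π / (2 * Real.sqrt x)) α := by
    apply ContinuousAt.div continuousAt_const
    · exact continuousAt_const.mul Real.continuous_sqrt.continuousAt
    · have : 0 < Real.sqrt α := Real.sqrt_pos.mpr hf'0
      positivity
  obtain ⟨η, hη, hgη⟩ := Metric.continuousAt_iff.mp hg ε' hε'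
  set ε := min (η / 2) (α / 2) with hε
  have hεpos : 0 < ε := lt_min (by linarith) (by linarith)
  have hεα : ε < α := lt_of_le_of_lt (min_le_right _ _) (by linarith)
  have hεη : ε < η := lt_of_le_of_lt (min_le_left _ _) (by linarith)
  have hbound1 : π / (2 * Real.sqrt (α - ε)) < L + ε' := by
    have h := hgη (x := α - ε) (by rw [Real.dist_eq]; rw [abs_of_nonpos (by linarith)]; linarith)
    rw [Real.dist_eq] at h
    have := (abs_lt.mp h).2
    linarith
  have hbound2 : L - ε' < π / (2 * Real.sqrt (α + ε)) := by
    have h := hgη (x := α + ε) (by rw [Real.dist_eq]; rw [abs_of_nonneg (by linarith)]; linarith)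
    rw [Real.dist_eq] at h
    have := (abs_lt.mp h).1
    linarith
  -- linear bounds on f near 0
  have hd : HasDerivAt f α 0 := ((hf.differentiable one_ne_zero) 0).hasDerivAt
  have hslope := hasDerivAt_iff_tendsto_slope.mp hd
  rw [Metric.tendsto_nhdsWithin_nhds] at hslope
  obtain ⟨δ0, hδ0, hδ0'⟩ := hslope ε hεpos
  set δ := min (δ0 / 2) (2⁻¹ : ℝ) with hδ
  have hδpos : 0 < δ := lt_min (by linarith) (by norm_num)
  have hδ1 : δ < 1 := lt_of_le_of_lt (min_le_right _ _) (by norm_num)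
  have hfs : ∀ s ∈ Icc (0:ℝ) δ, (α - ε) * s ≤ f s ∧ f s ≤ (α + ε) * s := by
    intro s hs
    rcases eq_or_lt_of_le hs.1 with h | h
    · simp [← h, hf0]
    · have hsδ0 : dist s 0 < δ0 := by
        rw [Real.dist_eq, sub_zero, abs_of_pos h]
        have h1 : δ ≤ δ0 / 2 := min_le_left _ _
        have := hs.2
        linarith
      have hmem : s ∈ ({0}ᶜ : Set ℝ) := by simp [h.ne']
      have hsl := hδ0' hmem hsδ0
      rw [Real.dist_eq] at hsl
      have hslope_eq : slope f 0 s = f s / s := by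
        rw [slope_def_field]
        simp [hf0]
      rw [hslope_eq] at hsl
      obtain ⟨hl, hr⟩ := abs_lt.mp hsl
      constructor
      · have := (lt_div_iff₀ h).mp (by linarith : α - ε < f s / s)
        linarith
      · have := (div_lt_iff₀ h).mp (by linarith : f s / s < α + ε)
        linarith
  have hIδ : 0 < ∫ s in (0:ℝ)..δ, f s :=
    intervalIntegral.intervalIntegral_pos_of_pos_on (hfc.intervalIntegrable _ _)
      (fun x hx => hfpos x ⟨hx.1, hx.2.trans hδ1⟩) hδpos
  refine ⟨min ω0 (Real.sqrt (2 * ∫ s in (0:ℝ)..δ, f s)),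
    lt_min hω0pos (Real.sqrt_pos.mpr (by linarith)), ?_⟩
  intro ω hω hωΔ
  have hωpos : (0:ℝ) < ω := mem_Ioi.mp hω
  rw [Real.dist_eq, sub_zero, abs_of_pos hωpos] at hωΔ
  have hωmem : ω ∈ Ioo 0 ω0 := ⟨hωpos, lt_of_lt_of_le hωΔ (min_le_left _ _)⟩
  obtain ⟨hqmem, hqeq⟩ := hqω ω hωmem
  set q := qω ω with hq
  have hq0 : 0 < q := hqmem.1
  have hq1 : q < 1 := hqmem.2
  have hqδ : q ≤ δ := by
    by_contra hcon
    push_neg at hcon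
    have h1 : (∫ s in (0:ℝ)..δ, f s) + ∫ s in δ..q, f s = ∫ s in (0:ℝ)..q, f s :=
      intervalIntegral.integral_add_adjacent_intervals (hfc.intervalIntegrable _ _)
        (hfc.intervalIntegrable _ _)
    have h2 : 0 ≤ ∫ s in δ..q, f s :=
      intervalIntegral.integral_nonneg hcon.le
        (fun u hu => hfnn u ⟨hδpos.le.trans hu.1, hu.2.trans hq1.le⟩)
    have h4 : ω < Real.sqrt (2 * ∫ s in (0:ℝ)..δ, f s) := lt_of_lt_of_le hωΔ (min_le_right _ _)
    have h5 := Real.sq_sqrt (by linarith : (0:ℝ) ≤ 2 * ∫ s in (0:ℝ)..δ, f s)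
    have h3 : ω ^ 2 < 2 * ∫ s in (0:ℝ)..δ, f s := by
      nlinarith [Real.sqrt_nonneg (2 * ∫ s in (0:ℝ)..δ, f s)]
    rw [hqeq, ← h1] at h3
    linarith
  -- bounds on the inner integral
  have hinner : ∀ r ∈ Icc (0:ℝ) q,
      (α - ε) * (q ^ 2 - r ^ 2) ≤ 2 * ∫ s in r..q, f s ∧
      2 * (∫ s in r..q, f s) ≤ (α + ε) * (q ^ 2 - r ^ 2) := by
    intro r hr
    have hrq : r ≤ q := hr.2
    have hsub : ∀ s ∈ Icc r q, s ∈ Icc (0:ℝ) δ := fun s hs => ⟨hr.1.trans hs.1, hs.2.trans hqδ⟩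
    have hlow : ∫ s in r..q, (α - ε) * s ≤ ∫ s in r..q, f s :=
      intervalIntegral.integral_mono_on hrq
        ((continuous_const.mul continuous_id).intervalIntegrable _ _)
        (hfc.intervalIntegrable _ _) (fun s hs => (hfs s (hsub s hs)).1)
    have hhigh : ∫ s in r..q, f s ≤ ∫ s in r..q, (α + ε) * s :=
      intervalIntegral.integral_mono_on hrq (hfc.intervalIntegrable _ _)
        ((continuous_const.mul continuous_id).intervalIntegrable _ _)
        (fun s hs => (hfs s (hsub s hs)).2)
    rw [intervalIntegral.integral_const_mul] at hlow hhigh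
    rw [show (∫ x in r..q, x) = (q ^ 2 - r ^ 2) / 2 from integral_id] at hlow hhigh
    constructor
    · nlinarith
    · nlinarith
  -- pointwise bounds on the integrand
  have hptL : ∀ r ∈ Icc (0:ℝ) q,
      1 / Real.sqrt ((α + ε) * (q ^ 2 - r ^ 2)) ≤ 1 / Real.sqrt (2 * ∫ s in r..q, f s) := by
    intro r hr
    rcases eq_or_lt_of_le hr.2 with h | h
    · rw [h]
      simp
    · obtain ⟨hin1, hin2⟩ := hinner r hr
      have hqr : 0 < q ^ 2 - r ^ 2 := by nlinarith [hr.1]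
      have hpos : 0 < 2 * ∫ s in r..q, f s := by nlinarith
      exact one_div_le_one_div_of_le (Real.sqrt_pos.mpr hpos) (Real.sqrt_le_sqrt hin2)
  have hptU : ∀ r ∈ Icc (0:ℝ) q,
      1 / Real.sqrt (2 * ∫ s in r..q, f s) ≤ 1 / Real.sqrt ((α - ε) * (q ^ 2 - r ^ 2)) := by
    intro r hr
    rcases eq_or_lt_of_le hr.2 with h | h
    · rw [h]
      simp
    · obtain ⟨hin1, hin2⟩ := hinner r hr
      have hqr : 0 < q ^ 2 - r ^ 2 := by nlinarith [hr.1]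
      have hpos : 0 < (α - ε) * (q ^ 2 - r ^ 2) := by nlinarith
      exact one_div_le_one_div_of_le (Real.sqrt_pos.mpr hpos) (Real.sqrt_le_sqrt hin1)
  -- integrability
  have hintL : IntervalIntegrable (fun r => 1 / Real.sqrt ((α + ε) * (q ^ 2 - r ^ 2)))
      MeasureTheory.volume 0 q := auxC_int _ _ (by linarith) hq0
  have hintU : IntervalIntegrable (fun r => 1 / Real.sqrt ((α - ε) * (q ^ 2 - r ^ 2)))
      MeasureTheory.volume 0 q := auxC_int _ _ (by linarith) hq0
  have hcont2 : Continuous fun r => 2 * ∫ s in r..q, f s := by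
    have h1 : Continuous fun r => ∫ s in q..r, f s :=
      intervalIntegral.continuous_primitive (fun a b => hfc.intervalIntegrable a b) q
    have h2 : (fun r => ∫ s in r..q, f s) = fun r => -∫ s in q..r, f s := by
      funext r
      rw [intervalIntegral.integral_symm]
    have h3 : Continuous fun r => ∫ s in r..q, f s := by
      rw [h2]
      exact h1.neg
    exact continuous_const.mul h3
  have hintM : IntervalIntegrable (fun r => 1 / Real.sqrt (2 * ∫ s in r..q, f s))
      MeasureTheory.volume 0 q := by
    apply hintU.mono_fun
    · apply Measurable.aestronglyMeasurable
      simp only [one_div]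
      exact (Real.continuous_sqrt.comp hcont2).measurable.inv
    · rw [Filter.EventuallyLE, MeasureTheory.ae_restrict_iff' measurableSet_uIoc]
      filter_upwards with r hr
      rw [Set.uIoc_of_le hq0.le] at hr
      have hrm : r ∈ Icc (0:ℝ) q := ⟨hr.1.le, hr.2⟩
      have h1 : (0:ℝ) ≤ 1 / Real.sqrt (2 * ∫ s in r..q, f s) := by positivity
      have h2 : (0:ℝ) ≤ 1 / Real.sqrt ((α - ε) * (q ^ 2 - r ^ 2)) := by positivity
      rw [Real.norm_eq_abs, Real.norm_eq_abs, abs_of_nonneg h1, abs_of_nonneg h2]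
      exact hptU r hrm
  -- integral comparison
  have hleft : π / (2 * Real.sqrt (α + ε)) ≤ zω ω := by
    rw [hzω ω hωmem, ← auxC (α + ε) q (by linarith) hq0]
    exact intervalIntegral.integral_mono_on hq0.le hintL hintM hptL
  have hright : zω ω ≤ π / (2 * Real.sqrt (α - ε)) := by
    rw [hzω ω hωmem, ← auxC (α - ε) q (by linarith) hq0]
    exact intervalIntegral.integral_mono_on hq0.le hintM hintU hptU
  rw [Real.dist_eq, abs_lt]
  constructor
  · linarith
  · linarith
end

section
/- Let f be C¹ on ℝ with f(u) ≤ K u for all u ≥ 0. Suppose c ≥ 2√K and P : (a,1) → (0,∞) satisfies P'(q) = c − f(q)/P(q) on (a,1) with P(1⁻)=0 and P'(1⁻) = (c − √(c² − 4f'(1)))/2 < 0. Then P(q) ≤ L(q) := ((c + √(c² − 4K))/2)·q for q ∈ (a,1), where L satisfies L'(q) = c − K q / L(q). -/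
open Real Set Filter

/-- Comparison with the linear solution: if `f u ≤ K u`, `c ≥ 2√K`, and `P` is a
positive solution of `P' = c − f(q)/P` on `(a,1)` approaching the saddle `(1,0)` with
limiting slope `(c − √(c² − 4 f'(1)))/2 < 0`, then `P(q) ≤ ((c + √(c² − 4K))/2) q`,
where the linear function `L(q) = ((c + √(c² − 4K))/2) q` solves `L' = c − Kq/L`. -/
theorem stmt_3 (f : ℝ → ℝ) (hf : ContDiff ℝ 1 f) (K : ℝ) (hK : 0 < K)
    (hf_lin : ∀ u : ℝ, 0 ≤ u → f u ≤ K * u)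
    (c : ℝ) (hc : 2 * Real.sqrt K ≤ c)
    (a : ℝ) (ha : a < 1) (P : ℝ → ℝ)
    (hPpos : ∀ q ∈ Ioo a 1, 0 < P q)
    (hPode : ∀ q ∈ Ioo a 1, HasDerivAt P (c - f q / P q) q)
    (hP1 : Tendsto P (nhdsWithin 1 (Iio 1)) (nhds 0))
    (hP'1 : Tendsto (deriv P) (nhdsWithin 1 (Iio 1))
      (nhds ((c - Real.sqrt (c ^ 2 - 4 * deriv f 1)) / 2)))
    (hslope : (c - Real.sqrt (c ^ 2 - 4 * deriv f 1)) / 2 < 0) :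
    (∀ q ∈ Ioo a 1, P q ≤ (c + Real.sqrt (c ^ 2 - 4 * K)) / 2 * q) ∧
      ∀ q : ℝ, 0 < q →
        HasDerivAt (fun q : ℝ => (c + Real.sqrt (c ^ 2 - 4 * K)) / 2 * q)
          (c - K * q / ((c + Real.sqrt (c ^ 2 - 4 * K)) / 2 * q)) q := by
  have hK' : 0 < Real.sqrt K := Real.sqrt_pos.mpr hK
  have hc0 : 0 < c := by linarith
  have hdisc : 0 ≤ c ^ 2 - 4 * K := by
    nlinarith [Real.sq_sqrt hK.le, Real.sqrt_nonneg K]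
  set s : ℝ := Real.sqrt (c ^ 2 - 4 * K) with hs_def
  have hs0 : 0 ≤ s := Real.sqrt_nonneg _
  set μ : ℝ := (c + s) / 2 with hμ_def
  have hμpos : 0 < μ := by rw [hμ_def]; positivity
  have hs2 : s * s = c ^ 2 - 4 * K := Real.mul_self_sqrt hdisc
  have hprod : μ * (c - μ) = K := by
    rw [hμ_def]; linear_combination (-1/4 : ℝ) * hs2
  have hKdiv : K / μ = c - μ := by
    rw [div_eq_iff hμpos.ne']; linear_combination -hprod
  have hLderiv : ∀ q : ℝ, HasDerivAt (fun q : ℝ => μ * q) μ q := fun q => by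
    simpa using (hasDerivAt_id q).const_mul μ
  constructor
  · -- main comparison
    by_contra hcon
    push_neg at hcon
    obtain ⟨q₀, hq₀, hPq₀⟩ := hcon
    by_cases hcase : ∃ b ∈ Ico q₀ 1, P b ≤ μ * b
    · obtain ⟨b, hb, hPb⟩ := hcase
      have hb1 : b < 1 := hb.2
      have hq₀b : q₀ ≤ b := hb.1
      have hIcc_sub : Icc q₀ b ⊆ Ioo a 1 := fun x hx =>
        ⟨lt_of_lt_of_le hq₀.1 hx.1, lt_of_le_of_lt hx.2 hb1⟩
      set w : ℝ → ℝ := fun q => P q - μ * q with hw_def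
      have hwderiv : ∀ x ∈ Ioo a 1, HasDerivAt w (c - f x / P x - μ) x := fun x hx =>
        (hPode x hx).sub (hLderiv x)
      have hwcont : ContinuousOn w (Icc q₀ b) := fun x hx =>
        ((hwderiv x (hIcc_sub hx)).continuousAt).continuousWithinAt
      set T : Set ℝ := {q | q ∈ Icc q₀ b ∧ P q ≤ μ * q} with hT
      have hTne : T.Nonempty := ⟨b, ⟨hq₀b, le_refl b⟩, hPb⟩
      have hTbdd : BddBelow T := ⟨q₀, fun x hx => hx.1.1⟩
      have hTclosed : IsClosed T := by
        have hTeq : T = Icc q₀ b ∩ w ⁻¹' Iic 0 := by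
          ext x
          simp only [hT, hw_def, mem_setOf_eq, mem_inter_iff, mem_preimage, mem_Iic,
            sub_nonpos]
        rw [hTeq]
        exact hwcont.preimage_isClosed_of_isClosed isClosed_Icc isClosed_Iic
      set q₁ : ℝ := sInf T with hq₁def
      have hq₁T : q₁ ∈ T := hTclosed.csInf_mem hTne hTbdd
      have hq₁Icc : q₁ ∈ Icc q₀ b := hq₁T.1
      have hq₁Ioo : q₁ ∈ Ioo a 1 := hIcc_sub hq₁Icc
      have hPq₁pos : 0 < P q₁ := hPpos q₁ hq₁Ioo
      have hq₁pos : 0 < q₁ := by nlinarith [hq₁T.2]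
      have hq₀q₁ : q₀ < q₁ := by
        rcases lt_or_eq_of_le hq₁Icc.1 with h | h
        · exact h
        · exfalso; rw [← h] at hq₁T; linarith [hq₁T.2]
      -- every point in [q₀, q₁) has μ * q < P q
      have hbefore : ∀ x, q₀ ≤ x → x < q₁ → μ * x < P x := by
        intro x hx1 hx2
        by_contra hle
        push_neg at hle
        exact notMem_of_lt_csInf hx2 hTbdd ⟨⟨hx1, le_trans hx2.le hq₁Icc.2⟩, hle⟩
      set q₂ : ℝ := max q₀ 0 with hq₂def
      have hq₂lt : q₂ < q₁ := max_lt hq₀q₁ hq₁pos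
      have hq₂ge0 : 0 ≤ q₂ := le_max_right _ _
      have hq₂geq₀ : q₀ ≤ q₂ := le_max_left _ _
      have hwq₂pos : 0 < w q₂ := by
        have := hbefore q₂ hq₂geq₀ hq₂lt
        simp only [hw_def]; linarith
      have hIcc_sub2 : Icc q₂ q₁ ⊆ Icc q₀ b := fun x hx =>
        ⟨le_trans hq₂geq₀ hx.1, le_trans hx.2 hq₁Icc.2⟩
      have hmono : StrictMonoOn w (Icc q₂ q₁) := by
        apply strictMonoOn_of_deriv_pos (convex_Icc _ _)
          (hwcont.mono hIcc_sub2)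
        intro x hx
        rw [interior_Icc] at hx
        have hxIoo : x ∈ Ioo a 1 := hIcc_sub (hIcc_sub2 ⟨hx.1.le, hx.2.le⟩)
        have hx0 : 0 < x := lt_of_le_of_lt hq₂ge0 hx.1
        have hPx : 0 < P x := hPpos x hxIoo
        have hμx : μ * x < P x := hbefore x (le_trans hq₂geq₀ hx.1.le) hx.2
        rw [(hwderiv x hxIoo).deriv]
        have h1 : f x / P x ≤ K * x / P x :=
          by gcongr; exact hf_lin x hx0.le
        have h2 : K * x / P x < K * x / (μ * x) :=
          div_lt_div_of_pos_left (mul_pos hK hx0) (mul_pos hμpos hx0) hμx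
        have h3 : K * x / (μ * x) = K / μ := by
          rw [mul_div_mul_right _ _ hx0.ne']
        rw [h3, hKdiv] at h2
        linarith
      have := hmono (left_mem_Icc.mpr hq₂lt.le) (right_mem_Icc.mpr hq₂lt.le) hq₂lt
      have hwq₁ : w q₁ ≤ 0 := by simp only [hw_def]; linarith [hq₁T.2]
      linarith
    · push_neg at hcase
      have hten : Tendsto (fun q => P q - μ * q) (nhdsWithin 1 (Iio 1)) (nhds (0 - μ * 1)) := by
        exact hP1.sub (((continuous_const.mul continuous_id').continuousAt).tendsto.mono_left
          nhdsWithin_le_nhds)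
      have hneg : ∀ᶠ q in nhdsWithin 1 (Iio 1), P q - μ * q < 0 :=
        hten.eventually_lt_const (by linarith)
      have hmem : ∀ᶠ q in nhdsWithin 1 (Iio 1), q ∈ Ico q₀ 1 := by
        filter_upwards [self_mem_nhdsWithin,
          eventually_nhdsWithin_of_eventually_nhds
            (eventually_gt_nhds hq₀.2)] with q h1 h2
        exact ⟨h2.le, h1⟩
      obtain ⟨q, hq1, hq2⟩ := (hneg.and hmem).exists
      have := hcase q hq2
      linarith
  · intro q hq
    have hval : c - K * q / (μ * q) = μ := by
      rw [mul_div_mul_right _ _ hq.ne', hKdiv]; ring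
    rw [hval]
    exact hLderiv q
end

section
/- Let f be continuous with f(1) = 0, f(s) > 0 for s ∈ (q₀, 1) for some q₀ < 1, and let P_c, P_0 be positive functions on an interval (a,1) satisfying P_c' = c − f(q)/P_c and P_0' = −f(q)/P_0 with P_c(1⁻) = P_0(1⁻) = 0 and 0 < P_c(q) < P_0(q) on (a,1), where c > 0. If M = sup_{[a,1]} P_0, then (P_c² − P_0²)'(q) = 2cP_c(q) ≤ 2cM on (a,1), and hence P_0(q) ≥ P_c(q) ≥ √(P_0(q)² − 2cM(1−q)) for q ∈ (a,1]. -/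
open Real Set Filter

/-- The differential inequality `(P_c² − P_0²)' = 2cP_c ≤ 2cM` and the resulting
two-sided bound `P_0 ≥ P_c ≥ √(P_0² − 2cM(1−q))` on `(a,1]`. -/
theorem stmt_12 (f : ℝ → ℝ) (hf : Continuous f) (hf1 : f 1 = 0)
    (q₀ : ℝ) (hq₀ : q₀ < 1) (hfpos : ∀ s ∈ Ioo q₀ 1, 0 < f s)
    (a : ℝ) (ha : a < 1) (c : ℝ) (hc : 0 < c)
    (Pc P0 : ℝ → ℝ)
    (hPcode : ∀ q ∈ Ioo a 1, HasDerivAt Pc (c - f q / Pc q) q)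
    (hP0ode : ∀ q ∈ Ioo a 1, HasDerivAt P0 (-(f q / P0 q)) q)
    (horder : ∀ q ∈ Ioo a 1, 0 < Pc q ∧ Pc q < P0 q)
    (hPc1 : Pc 1 = 0) (hP01 : P0 1 = 0)
    (hPccont : ContinuousOn Pc (Ioc a 1)) (hP0cont : ContinuousOn P0 (Ioc a 1))
    (M : ℝ) (hM : ∀ q ∈ Icc a 1, P0 q ≤ M) :
    (∀ q ∈ Ioo a 1,
      HasDerivAt (fun q : ℝ => Pc q ^ 2 - P0 q ^ 2) (2 * c * Pc q) q ∧
        2 * c * Pc q ≤ 2 * c * M) ∧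
    ∀ q ∈ Ioc a 1,
      Pc q ≤ P0 q ∧ Real.sqrt (P0 q ^ 2 - 2 * c * M * (1 - q)) ≤ Pc q := by
  -- derivative of g = Pc² - P0² on (a,1)
  have hgderiv : ∀ q ∈ Ioo a 1,
      HasDerivAt (fun q : ℝ => Pc q ^ 2 - P0 q ^ 2) (2 * c * Pc q) q := by
    intro q hq
    have h1 := ((hPcode q hq).pow 2).sub ((hP0ode q hq).pow 2)
    have hPcpos := (horder q hq).1
    have hP0pos := hPcpos.trans (horder q hq).2
    replace h1 : HasDerivAt (fun q : ℝ => Pc q ^ 2 - P0 q ^ 2) (((2:ℕ):ℝ) * Pc q ^ (2 - 1) * (c - f q / Pc q) - ((2:ℕ):ℝ) * P0 q ^ (2 - 1) * -(f q / P0 q)) q := h1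
    convert h1 using 1
    field_simp
    ring
  have hPcM : ∀ q ∈ Ioo a 1, Pc q ≤ M := fun q hq =>
    ((horder q hq).2.le).trans (hM q ⟨hq.1.le, hq.2.le⟩)
  have hbound : ∀ q ∈ Ioo a 1, 2 * c * Pc q ≤ 2 * c * M := fun q hq => by
    have := hPcM q hq; nlinarith
  refine ⟨fun q hq => ⟨hgderiv q hq, hbound q hq⟩, ?_⟩
  intro q hq
  rcases eq_or_lt_of_le hq.2 with h1 | h1
  · subst h1
    constructor
    · rw [hPc1, hP01]
    · rw [hPc1, hP01]
      simp
  have hq' : q ∈ Ioo a 1 := ⟨hq.1, h1⟩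
  have hPcpos := (horder q hq').1
  refine ⟨(horder q hq').2.le, ?_⟩
  -- monotonicity of φ x = 2cM x - (Pc x² - P0 x²) on [q,1]
  set φ : ℝ → ℝ := fun x => 2 * c * M * x - (Pc x ^ 2 - P0 x ^ 2) with hφ
  have hsub : Icc q 1 ⊆ Ioc a 1 := fun x hx => ⟨lt_of_lt_of_le hq.1 hx.1, hx.2⟩
  have hφcont : ContinuousOn φ (Icc q 1) := by
    apply ContinuousOn.sub
    · exact (continuous_const.mul continuous_id).continuousOn
    · exact ((hPccont.mono hsub).pow 2).sub ((hP0cont.mono hsub).pow 2)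
  have hmono : MonotoneOn φ (Icc q 1) := by
    apply monotoneOn_of_deriv_nonneg (convex_Icc q 1) hφcont
    · intro x hx
      rw [interior_Icc] at hx
      have hx' : x ∈ Ioo a 1 := ⟨hq.1.trans hx.1, hx.2⟩
      exact (((hasDerivAt_id x).const_mul (2*c*M)).sub (hgderiv x hx')).differentiableAt.differentiableWithinAt
    · intro x hx
      rw [interior_Icc] at hx
      have hx' : x ∈ Ioo a 1 := ⟨hq.1.trans hx.1, hx.2⟩
      have hd : HasDerivAt φ (2 * c * M * 1 - 2 * c * Pc x) x :=
        ((hasDerivAt_id x).const_mul (2*c*M)).sub (hgderiv x hx')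
      rw [hd.deriv]
      have := hbound x hx'
      linarith
  have hmq := hmono (left_mem_Icc.2 h1.le) (right_mem_Icc.2 h1.le) h1.le
  have : P0 q ^ 2 - 2 * c * M * (1 - q) ≤ Pc q ^ 2 := by
    simp only [hφ, hPc1, hP01] at hmq
    nlinarith
  calc Real.sqrt (P0 q ^ 2 - 2 * c * M * (1 - q)) ≤ Real.sqrt (Pc q ^ 2) :=
        Real.sqrt_le_sqrt this
    _ = Pc q := by rw [Real.sqrt_sq hPcpos.le]
end

section
/- Suppose f is C¹, f(0) = 0, f'(0) > 0, h₀ < π/(2√(f'(0))), and choose δ > 0 with π²/(4(1+δ)²h₀²) − f'(0) ≥ 2δ, and s > 0 with π μ s ≤ δ² h₀² and f(u) ≤ (f'(0)+δ)u for u ∈ [0,s]. Define k(t) = h₀(1+δ − (δ/2)e^{−δt}) and w(t,x) = s e^{−δt} cos(πx/(2k(t))). Then for all t > 0 and x ∈ (−k(t), k(t)): (a) w_t − w_{xx} − f(w) ≥ 0; (b) w(t, ±k(t)) = 0; (c) −μ w_x(t, k(t)) ≤ k'(t) and μ w_x(t, −k(t)) ≤ k'(t). -/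
open Real Set

lemma expAux (δ t : ℝ) :
    HasDerivAt (fun t' : ℝ => Real.exp (-δ * t')) (-δ * Real.exp (-δ * t)) t := by
  have h1 : HasDerivAt (fun t' : ℝ => -δ * t') (-δ) t := by
    simpa using (hasDerivAt_id t).const_mul (-δ)
  have h := (Real.hasDerivAt_exp (-δ * t)).comp t h1
  simp only [Function.comp_def] at h
  exact h.congr_deriv (by ring)

lemma kAux (h₀ δ t : ℝ) :
    HasDerivAt (fun t : ℝ => h₀ * (1 + δ - δ / 2 * Real.exp (-δ * t)))
      (h₀ * (δ ^ 2 / 2 * Real.exp (-δ * t))) t := by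
  have h := (((expAux δ t).const_mul (δ / 2)).const_sub (1 + δ)).const_mul h₀
  exact h.congr_deriv (by ring)

lemma linAux (c K y : ℝ) : HasDerivAt (fun z : ℝ => c * z / (2 * K)) (c / (2 * K)) y := by
  simpa using ((hasDerivAt_id y).const_mul c).div_const (2 * K)

lemma cosAux (a c K y : ℝ) :
    HasDerivAt (fun z : ℝ => a * Real.cos (c * z / (2 * K)))
      (-(a * (c / (2 * K))) * Real.sin (c * y / (2 * K))) y := by
  have h := ((Real.hasDerivAt_cos (c * y / (2 * K))).comp y (linAux c K y)).const_mul a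
  simp only [Function.comp_def] at h
  exact h.congr_deriv (by ring)

lemma sinAux (a c K y : ℝ) :
    HasDerivAt (fun z : ℝ => a * Real.sin (c * z / (2 * K)))
      (a * (c / (2 * K)) * Real.cos (c * y / (2 * K))) y := by
  have h := ((Real.hasDerivAt_sin (c * y / (2 * K))).comp y (linAux c K y)).const_mul a
  simp only [Function.comp_def] at h
  exact h.congr_deriv (by ring)

lemma gAux (c h₀ δ t : ℝ) (hne : (2 * (h₀ * (1 + δ - δ / 2 * Real.exp (-δ * t)))) ≠ 0) :
    HasDerivAt (fun t' : ℝ => c / (2 * (h₀ * (1 + δ - δ / 2 * Real.exp (-δ * t')))))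
      ((0 * (2 * (h₀ * (1 + δ - δ / 2 * Real.exp (-δ * t)))) - c * (2 * (h₀ * (δ ^ 2 / 2 * Real.exp (-δ * t))))) /
        (2 * (h₀ * (1 + δ - δ / 2 * Real.exp (-δ * t)))) ^ 2) t :=
  (hasDerivAt_const t c).div ((kAux h₀ δ t).const_mul 2) hne

lemma timeAux (s c h₀ δ t : ℝ) (hne : (2 * (h₀ * (1 + δ - δ / 2 * Real.exp (-δ * t)))) ≠ 0) :
    HasDerivAt (fun t' : ℝ => s * Real.exp (-δ * t') *
        Real.cos (c / (2 * (h₀ * (1 + δ - δ / 2 * Real.exp (-δ * t'))))))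
      (s * (-δ * Real.exp (-δ * t)) * Real.cos (c / (2 * (h₀ * (1 + δ - δ / 2 * Real.exp (-δ * t)))))
        + s * Real.exp (-δ * t) *
          (Real.sin (c / (2 * (h₀ * (1 + δ - δ / 2 * Real.exp (-δ * t))))) * (c * (h₀ * (δ ^ 2 * Real.exp (-δ * t)))) /
            (2 * (h₀ * (1 + δ - δ / 2 * Real.exp (-δ * t)))) ^ 2)) t := by
  have h := ((expAux δ t).const_mul s).mul
    ((Real.hasDerivAt_cos (c / (2 * (h₀ * (1 + δ - δ / 2 * Real.exp (-δ * t)))))).comp t (gAux c h₀ δ t hne))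
  simp only [Function.comp_def] at h
  exact h.congr_deriv (by ring)

set_option maxHeartbeats 2000000 in
/-- Verification of the upper solution `w(t,x) = s e^{−δt} cos(πx/(2k(t)))`,
`k(t) = h₀(1 + δ − (δ/2)e^{−δt})`, in the monostable vanishing regime. -/
theorem stmt_14 (f : ℝ → ℝ) (hf : ContDiff ℝ 1 f) (hf0 : f 0 = 0)
    (hf'0 : 0 < deriv f 0) (μ h₀ δ s : ℝ) (hμ : 0 < μ) (hh₀ : 0 < h₀)
    (hsmall : h₀ < Real.pi / (2 * Real.sqrt (deriv f 0)))
    (hδ : 0 < δ)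
    (hδchoice : Real.pi ^ 2 / (4 * (1 + δ) ^ 2 * h₀ ^ 2) - deriv f 0 ≥ 2 * δ)
    (hspos : 0 < s) (hs1 : Real.pi * μ * s ≤ δ ^ 2 * h₀ ^ 2)
    (hs2 : ∀ u ∈ Icc 0 s, f u ≤ (deriv f 0 + δ) * u)
    (k : ℝ → ℝ) (hk : ∀ t, k t = h₀ * (1 + δ - (δ / 2) * Real.exp (-δ * t)))
    (w : ℝ → ℝ → ℝ)
    (hw : ∀ t x, w t x = s * Real.exp (-δ * t) * Real.cos (Real.pi * x / (2 * k t))) :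
    ∀ t : ℝ, 0 < t →
      (∀ x ∈ Ioo (-k t) (k t),
        deriv (fun t' => w t' x) t - deriv (deriv (fun y => w t y)) x - f (w t x) ≥ 0) ∧
      w t (k t) = 0 ∧ w t (-k t) = 0 ∧
      -μ * deriv (fun y => w t y) (k t) ≤ deriv k t ∧
      μ * deriv (fun y => w t y) (-k t) ≤ deriv k t := by
  have hkf : k = fun t => h₀ * (1 + δ - δ / 2 * Real.exp (-δ * t)) := funext hk
  subst hkf
  have hwf : w = fun t x => s * Real.exp (-δ * t) *
      Real.cos (Real.pi * x / (2 * (h₀ * (1 + δ - δ / 2 * Real.exp (-δ * t))))) := by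
    funext t x
    exact hw t x
  subst hwf
  intro t ht
  beta_reduce
  have hEpos : 0 < Real.exp (-δ * t) := Real.exp_pos _
  have hE1 : Real.exp (-δ * t) ≤ 1 := by
    rw [show (1 : ℝ) = Real.exp 0 by simp]
    exact Real.exp_le_exp.mpr (by nlinarith)
  have hKlo : h₀ * (1 + δ / 2) ≤ (h₀ * (1 + δ - δ / 2 * Real.exp (-δ * t))) := by
    nlinarith [mul_nonneg (mul_nonneg hh₀.le (show (0:ℝ) ≤ δ / 2 by linarith))
      (show (0:ℝ) ≤ 1 - Real.exp (-δ * t) by linarith)]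
  have hKhi : (h₀ * (1 + δ - δ / 2 * Real.exp (-δ * t))) ≤ h₀ * (1 + δ) := by
    nlinarith [mul_nonneg (mul_nonneg hh₀.le (show (0:ℝ) ≤ δ / 2 by linarith)) hEpos.le]
  have hKpos : (0 : ℝ) < (h₀ * (1 + δ - δ / 2 * Real.exp (-δ * t))) := by
    nlinarith [mul_pos hh₀ (show (0:ℝ) < 1 + δ / 2 by linarith)]
  have hKne : (h₀ * (1 + δ - δ / 2 * Real.exp (-δ * t))) ≠ 0 := ne_of_gt hKpos
  have h2Kne : (2 * (h₀ * (1 + δ - δ / 2 * Real.exp (-δ * t)))) ≠ 0 := by positivity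
  have hhalf : Real.pi * (h₀ * (1 + δ - δ / 2 * Real.exp (-δ * t))) / (2 * (h₀ * (1 + δ - δ / 2 * Real.exp (-δ * t)))) = Real.pi / 2 := by
    rw [show Real.pi * (h₀ * (1 + δ - δ / 2 * Real.exp (-δ * t))) = (h₀ * (1 + δ - δ / 2 * Real.exp (-δ * t))) * Real.pi from mul_comm _ _,
      show (2:ℝ) * (h₀ * (1 + δ - δ / 2 * Real.exp (-δ * t))) = (h₀ * (1 + δ - δ / 2 * Real.exp (-δ * t))) * 2 from mul_comm _ _, mul_div_mul_left _ _ hKne]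
  refine ⟨?_, ?_, ?_, ?_, ?_⟩
  · -- (a) the differential inequality
    intro x hx
    obtain ⟨hx1, hx2⟩ := hx
    rw [(timeAux s (Real.pi * x) h₀ δ t h2Kne).deriv]
    have hD1 : deriv (fun y => s * Real.exp (-δ * t) * Real.cos (Real.pi * y / (2 * (h₀ * (1 + δ - δ / 2 * Real.exp (-δ * t))))))
        = fun y => -(s * Real.exp (-δ * t) * (Real.pi / (2 * (h₀ * (1 + δ - δ / 2 * Real.exp (-δ * t)))))) *
            Real.sin (Real.pi * y / (2 * (h₀ * (1 + δ - δ / 2 * Real.exp (-δ * t))))) :=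
      funext fun y => (cosAux (s * Real.exp (-δ * t)) Real.pi (h₀ * (1 + δ - δ / 2 * Real.exp (-δ * t))) y).deriv
    rw [hD1, (sinAux (-(s * Real.exp (-δ * t) * (Real.pi / (2 * (h₀ * (1 + δ - δ / 2 * Real.exp (-δ * t))))))) Real.pi (h₀ * (1 + δ - δ / 2 * Real.exp (-δ * t))) x).deriv]
    have h1 : Real.pi * x / (2 * (h₀ * (1 + δ - δ / 2 * Real.exp (-δ * t)))) < Real.pi / 2 := by
      rw [div_lt_div_iff₀ (by positivity) (by norm_num : (0:ℝ) < 2)]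
      nlinarith [mul_pos Real.pi_pos (show (0:ℝ) < (h₀ * (1 + δ - δ / 2 * Real.exp (-δ * t))) - x by linarith)]
    have h0 : -(Real.pi / 2) < Real.pi * x / (2 * (h₀ * (1 + δ - δ / 2 * Real.exp (-δ * t)))) := by
      rw [show -(Real.pi / 2) = -Real.pi / 2 by ring,
        div_lt_div_iff₀ (by norm_num : (0:ℝ) < 2) (by positivity)]
      nlinarith [mul_pos Real.pi_pos (show (0:ℝ) < x + (h₀ * (1 + δ - δ / 2 * Real.exp (-δ * t))) by linarith)]
    have hC : 0 < Real.cos (Real.pi * x / (2 * (h₀ * (1 + δ - δ / 2 * Real.exp (-δ * t))))) := Real.cos_pos_of_mem_Ioo ⟨h0, h1⟩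
    have hC1 : Real.cos (Real.pi * x / (2 * (h₀ * (1 + δ - δ / 2 * Real.exp (-δ * t))))) ≤ 1 := Real.cos_le_one _
    have hwmem : s * Real.exp (-δ * t) * Real.cos (Real.pi * x / (2 * (h₀ * (1 + δ - δ / 2 * Real.exp (-δ * t))))) ∈ Icc 0 s := by
      constructor
      · positivity
      · have hEC : Real.exp (-δ * t) * Real.cos (Real.pi * x / (2 * (h₀ * (1 + δ - δ / 2 * Real.exp (-δ * t))))) ≤ 1 :=
          mul_le_one₀ hE1 hC.le hC1
        nlinarith [mul_le_mul_of_nonneg_left hEC hspos.le]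
    have hfC := hs2 _ hwmem
    have hSx : 0 ≤ Real.sin (Real.pi * x / (2 * (h₀ * (1 + δ - δ / 2 * Real.exp (-δ * t))))) * x := by
      rcases le_total 0 x with hxx | hxx
      · refine mul_nonneg (Real.sin_nonneg_of_nonneg_of_le_pi ?_ ?_) hxx
        · positivity
        · nlinarith [Real.pi_pos]
      · have hsin : Real.sin (Real.pi * x / (2 * (h₀ * (1 + δ - δ / 2 * Real.exp (-δ * t))))) ≤ 0 := by
          have hn : 0 ≤ Real.sin (-(Real.pi * x / (2 * (h₀ * (1 + δ - δ / 2 * Real.exp (-δ * t)))))) := by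
            refine Real.sin_nonneg_of_nonneg_of_le_pi ?_ ?_
            · have : Real.pi * x ≤ 0 := mul_nonpos_of_nonneg_of_nonpos Real.pi_pos.le hxx
              have := div_nonpos_of_nonpos_of_nonneg this (by positivity : (0:ℝ) ≤ 2 * (h₀ * (1 + δ - δ / 2 * Real.exp (-δ * t))))
              linarith
            · nlinarith [Real.pi_pos]
          rw [Real.sin_neg] at hn
          linarith
        nlinarith
    have hden : 0 < 4 * (1 + δ) ^ 2 * h₀ ^ 2 := by
      have h1d : (0 : ℝ) < 1 + δ := by linarith
      nlinarith [mul_pos (mul_pos h1d h1d) (mul_pos hh₀ hh₀)]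
    have hPsq : Real.pi ^ 2 / (4 * (1 + δ) ^ 2 * h₀ ^ 2) ≤
        Real.pi / (2 * (h₀ * (1 + δ - δ / 2 * Real.exp (-δ * t)))) * (Real.pi / (2 * (h₀ * (1 + δ - δ / 2 * Real.exp (-δ * t))))) := by
      rw [div_mul_div_comm, div_le_div_iff₀ hden (by positivity)]
      have hK2 : (h₀ * (1 + δ - δ / 2 * Real.exp (-δ * t))) * (h₀ * (1 + δ - δ / 2 * Real.exp (-δ * t))) ≤ (h₀ * (1 + δ)) * (h₀ * (1 + δ)) :=
        mul_le_mul hKhi hKhi hKpos.le (by nlinarith)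
      nlinarith [mul_le_mul_of_nonneg_left hK2 (sq_nonneg Real.pi)]
    have h3 : deriv f 0 + 2 * δ ≤ Real.pi / (2 * (h₀ * (1 + δ - δ / 2 * Real.exp (-δ * t)))) * (Real.pi / (2 * (h₀ * (1 + δ - δ / 2 * Real.exp (-δ * t))))) :=
      le_trans (by linarith) hPsq
    have hT2 : 0 ≤ s * Real.exp (-δ * t) *
        (Real.sin (Real.pi * x / (2 * (h₀ * (1 + δ - δ / 2 * Real.exp (-δ * t))))) * (Real.pi * x * (h₀ * (δ ^ 2 * Real.exp (-δ * t)))) /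
          (2 * (h₀ * (1 + δ - δ / 2 * Real.exp (-δ * t)))) ^ 2) := by
      have hA : 0 ≤ Real.sin (Real.pi * x / (2 * (h₀ * (1 + δ - δ / 2 * Real.exp (-δ * t))))) *
          (Real.pi * x * (h₀ * (δ ^ 2 * Real.exp (-δ * t)))) := by
        nlinarith [mul_nonneg hSx (show (0:ℝ) ≤ Real.pi * (h₀ * (δ ^ 2 * Real.exp (-δ * t)))
          by positivity)]
      have := div_nonneg hA (by positivity : (0:ℝ) ≤ (2 * (h₀ * (1 + δ - δ / 2 * Real.exp (-δ * t)))) ^ 2)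
      nlinarith [mul_nonneg (mul_nonneg hspos.le hEpos.le) this]
    have h4 : 0 ≤ s * Real.exp (-δ * t) * Real.cos (Real.pi * x / (2 * (h₀ * (1 + δ - δ / 2 * Real.exp (-δ * t))))) := by positivity
    nlinarith [hfC, hT2, mul_le_mul_of_nonneg_left h3 h4]
  · rw [hhalf, Real.cos_pi_div_two, mul_zero]
  · rw [show Real.pi * -(h₀ * (1 + δ - δ / 2 * Real.exp (-δ * t))) / (2 * (h₀ * (1 + δ - δ / 2 * Real.exp (-δ * t)))) = -(Real.pi * (h₀ * (1 + δ - δ / 2 * Real.exp (-δ * t))) / (2 * (h₀ * (1 + δ - δ / 2 * Real.exp (-δ * t))))) by ring, hhalf,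
      Real.cos_neg, Real.cos_pi_div_two, mul_zero]
  · rw [(kAux h₀ δ t).deriv,
      (cosAux (s * Real.exp (-δ * t)) Real.pi (h₀ * (1 + δ - δ / 2 * Real.exp (-δ * t))) ((h₀ * (1 + δ - δ / 2 * Real.exp (-δ * t))))).deriv, hhalf, Real.sin_pi_div_two,
      mul_one]
    have key : Real.pi * μ * s ≤ δ ^ 2 * h₀ * (h₀ * (1 + δ - δ / 2 * Real.exp (-δ * t))) := by
      nlinarith [mul_nonneg (mul_nonneg (sq_nonneg δ) hh₀.le)
        (show (0:ℝ) ≤ (h₀ * (1 + δ - δ / 2 * Real.exp (-δ * t))) - h₀ by nlinarith)]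
    rw [show -μ * -(s * Real.exp (-δ * t) * (Real.pi / (2 * (h₀ * (1 + δ - δ / 2 * Real.exp (-δ * t))))))
        = μ * s * Real.exp (-δ * t) * Real.pi / (2 * (h₀ * (1 + δ - δ / 2 * Real.exp (-δ * t)))) by ring,
      div_le_iff₀ (by positivity : (0:ℝ) < 2 * (h₀ * (1 + δ - δ / 2 * Real.exp (-δ * t))))]
    nlinarith [mul_le_mul_of_nonneg_right key hEpos.le]
  · rw [(kAux h₀ δ t).deriv,
      (cosAux (s * Real.exp (-δ * t)) Real.pi (h₀ * (1 + δ - δ / 2 * Real.exp (-δ * t))) (-(h₀ * (1 + δ - δ / 2 * Real.exp (-δ * t))))).deriv,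
      show Real.pi * -(h₀ * (1 + δ - δ / 2 * Real.exp (-δ * t))) / (2 * (h₀ * (1 + δ - δ / 2 * Real.exp (-δ * t)))) = -(Real.pi * (h₀ * (1 + δ - δ / 2 * Real.exp (-δ * t))) / (2 * (h₀ * (1 + δ - δ / 2 * Real.exp (-δ * t))))) by ring, hhalf,
      Real.sin_neg, Real.sin_pi_div_two]
    have key : Real.pi * μ * s ≤ δ ^ 2 * h₀ * (h₀ * (1 + δ - δ / 2 * Real.exp (-δ * t))) := by
      nlinarith [mul_nonneg (mul_nonneg (sq_nonneg δ) hh₀.le)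
        (show (0:ℝ) ≤ (h₀ * (1 + δ - δ / 2 * Real.exp (-δ * t))) - h₀ by nlinarith)]
    rw [show μ * (-(s * Real.exp (-δ * t) * (Real.pi / (2 * (h₀ * (1 + δ - δ / 2 * Real.exp (-δ * t)))))) * -1)
        = μ * s * Real.exp (-δ * t) * Real.pi / (2 * (h₀ * (1 + δ - δ / 2 * Real.exp (-δ * t)))) by ring,
      div_le_iff₀ (by positivity : (0:ℝ) < 2 * (h₀ * (1 + δ - δ / 2 * Real.exp (-δ * t))))]
    nlinarith [mul_le_mul_of_nonneg_right key hEpos.le]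
end

section
/- Let θ ∈ (0,1), μ > 0 and set η₂ = (1/2)·min{θ, π/(8μ)}. For h₂ > 0 let ω = π/(4h₂), k(t) = h₂(2 − e^{−ω²t}) and w(t,x) = 2η₂ cos(πx/(2k(t))) e^{−ω²t}. Then for all t ≥ 0 and |x| ≤ k(t): (a) h₂ ≤ k(t) ≤ 2h₂; (b) w_t − w_{xx} ≥ (π²/(4k(t)²) − ω²) w ≥ 0; (c) k'(t) + μ w_x(t, k(t)) = e^{−ω²t}(π²/(16h₂) − πμη₂/k(t)) ≥ 0. -/
open Real Set

set_option maxHeartbeats 1000000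

/-- Verification of the combustion-case upper solution
`w(t,x) = 2η₂ cos(πx/(2k(t))) e^{−ω²t}`, `k(t) = h₂(2 − e^{−ω²t})`. -/
theorem stmt_15 (θ μ : ℝ) (hθ : θ ∈ Ioo (0:ℝ) 1) (hμ : 0 < μ)
    (η₂ : ℝ) (hη₂ : η₂ = (1 / 2) * min θ (Real.pi / (8 * μ)))
    (h₂ : ℝ) (hh₂ : 0 < h₂)
    (ω : ℝ) (hω : ω = Real.pi / (4 * h₂))
    (k : ℝ → ℝ) (hk : ∀ t, k t = h₂ * (2 - Real.exp (-ω ^ 2 * t)))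
    (w : ℝ → ℝ → ℝ)
    (hw : ∀ t x, w t x =
      2 * η₂ * Real.cos (Real.pi * x / (2 * k t)) * Real.exp (-ω ^ 2 * t)) :
    ∀ t : ℝ, 0 ≤ t →
      (h₂ ≤ k t ∧ k t ≤ 2 * h₂) ∧
      (∀ x : ℝ, |x| ≤ k t →
        deriv (fun t' => w t' x) t - deriv (deriv (fun y => w t y)) x ≥
          (Real.pi ^ 2 / (4 * (k t) ^ 2) - ω ^ 2) * w t x ∧
        (Real.pi ^ 2 / (4 * (k t) ^ 2) - ω ^ 2) * w t x ≥ 0) ∧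
      (deriv k t + μ * deriv (fun y => w t y) (k t) =
        Real.exp (-ω ^ 2 * t) * (Real.pi ^ 2 / (16 * h₂) - Real.pi * μ * η₂ / k t) ∧
       deriv k t + μ * deriv (fun y => w t y) (k t) ≥ 0) := by
  intro t ht
  have hπ := Real.pi_pos
  have hη₂pos : 0 < η₂ := by
    rw [hη₂]
    have h1 : 0 < min θ (Real.pi / (8 * μ)) := lt_min hθ.1 (by positivity)
    linarith
  have hωpos : 0 < ω := by rw [hω]; positivity
  set E := Real.exp (-ω ^ 2 * t) with hEdef
  have hEpos : 0 < E := Real.exp_pos _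
  have hE1 : E ≤ 1 := by
    rw [hEdef]
    apply Real.exp_le_one_iff.mpr
    nlinarith [sq_nonneg ω]
  have hk1 : h₂ ≤ k t := by rw [hk t]; nlinarith
  have hk2 : k t ≤ 2 * h₂ := by rw [hk t]; nlinarith
  have hkpos : 0 < k t := lt_of_lt_of_le hh₂ hk1
  have hω2 : ω ^ 2 = Real.pi ^ 2 / (16 * h₂ ^ 2) := by
    rw [hω]; field_simp; ring
  -- derivative of k
  have hexp : HasDerivAt (fun s : ℝ => Real.exp (-ω ^ 2 * s)) (E * (-ω ^ 2)) t := by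
    have h1 : HasDerivAt (fun s : ℝ => -ω ^ 2 * s) (-ω ^ 2) t := by
      simpa using (hasDerivAt_id t).const_mul (-ω ^ 2)
    simpa [hEdef] using h1.exp
  have hdk : HasDerivAt k (h₂ * (ω ^ 2 * E)) t := by
    have hkfun : k = fun s => h₂ * (2 - Real.exp (-ω ^ 2 * s)) := funext hk
    rw [hkfun]
    have h3 := ((hasDerivAt_const t (2 : ℝ)).sub hexp).const_mul h₂
    refine h3.congr_deriv ?_
    ring
  -- spatial derivative (first)
  have hwt : (fun y => w t y)
      = fun y => 2 * η₂ * Real.cos (Real.pi * y / (2 * k t)) * E := by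
    funext y; rw [hw t y]
  have hlin : ∀ y : ℝ, HasDerivAt (fun y : ℝ => Real.pi * y / (2 * k t))
      (Real.pi / (2 * k t)) y := by
    intro y
    simpa using ((hasDerivAt_id y).const_mul Real.pi).div_const (2 * k t)
  have hdx : ∀ y : ℝ, HasDerivAt (fun y => w t y)
      (2 * η₂ * (-Real.sin (Real.pi * y / (2 * k t)) * (Real.pi / (2 * k t))) * E) y := by
    intro y
    rw [hwt]
    exact (((hlin y).cos).const_mul (2 * η₂)).mul_const E
  have hderivfun : deriv (fun y => w t y)
      = fun y => 2 * η₂ * (-Real.sin (Real.pi * y / (2 * k t)) * (Real.pi / (2 * k t))) * E :=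
    funext fun y => (hdx y).deriv
  refine ⟨⟨hk1, hk2⟩, ?_, ?_⟩
  · -- PDE inequality
    intro x hxk
    obtain ⟨hxl, hxr⟩ := abs_le.mp hxk
    set u := Real.pi * x / (2 * k t) with hudef
    have hupi : -(Real.pi / 2) ≤ u ∧ u ≤ Real.pi / 2 := by
      constructor
      · rw [hudef, le_div_iff₀ (by positivity)]; nlinarith
      · rw [hudef, div_le_iff₀ (by positivity)]; nlinarith
    have hcos : 0 ≤ Real.cos u := Real.cos_nonneg_of_mem_Icc ⟨hupi.1, hupi.2⟩
    -- second spatial derivative at x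
    have hdx2 : HasDerivAt
        (fun y => 2 * η₂ * (-Real.sin (Real.pi * y / (2 * k t)) * (Real.pi / (2 * k t))) * E)
        (2 * η₂ * (-(Real.cos u * (Real.pi / (2 * k t))) * (Real.pi / (2 * k t))) * E) x := by
      exact ((((hlin x).sin.neg).mul_const (Real.pi / (2 * k t))).const_mul (2 * η₂)).mul_const E
    have hwxx : deriv (deriv (fun y => w t y)) x
        = 2 * η₂ * (-(Real.cos u * (Real.pi / (2 * k t))) * (Real.pi / (2 * k t))) * E := by
      rw [hderivfun]; exact hdx2.deriv
    -- time derivative at t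
    have hwfun2 : (fun t' => w t' x)
        = fun t' => 2 * η₂ * Real.cos (Real.pi * x / (2 * k t')) * Real.exp (-ω ^ 2 * t') :=
      funext fun s => hw s x
    have hu : HasDerivAt (fun t' => Real.pi * x / (2 * k t'))
        ((0 * (2 * k t) - Real.pi * x * (2 * (h₂ * (ω ^ 2 * E)))) / (2 * k t) ^ 2) t :=
      (hasDerivAt_const t (Real.pi * x)).div (hdk.const_mul 2) (by positivity)
    have hWt : HasDerivAt (fun t' => w t' x)
        (2 * η₂ * (-Real.sin u *
            ((0 * (2 * k t) - Real.pi * x * (2 * (h₂ * (ω ^ 2 * E)))) / (2 * k t) ^ 2)) * E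
          + 2 * η₂ * Real.cos u * (E * (-ω ^ 2))) t := by
      rw [hwfun2]
      exact (hu.cos.const_mul (2 * η₂)).mul hexp
    have hsinx : 0 ≤ Real.sin u * x := by
      rcases le_or_gt 0 x with hx0 | hx0
      · refine mul_nonneg (Real.sin_nonneg_of_nonneg_of_le_pi ?_ ?_) hx0
        · rw [hudef]; positivity
        · linarith [hupi.2, Real.pi_pos]
      · have hs : Real.sin u ≤ 0 := by
          have : Real.sin (-u) ≥ 0 := by
            apply Real.sin_nonneg_of_nonneg_of_le_pi
            · rw [hudef]
              have : Real.pi * x ≤ 0 := by nlinarith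
              have h2k : (0:ℝ) < 2 * k t := by positivity
              simp only [neg_nonneg]
              exact div_nonpos_of_nonpos_of_nonneg this h2k.le
            · linarith [hupi.1]
          rw [Real.sin_neg] at this; linarith
        nlinarith
    constructor
    · rw [hWt.deriv, hwxx, hw t x]
      have key : 2 * η₂ * (-Real.sin u *
            ((0 * (2 * k t) - Real.pi * x * (2 * (h₂ * (ω ^ 2 * E)))) / (2 * k t) ^ 2)) * E
          + 2 * η₂ * Real.cos u * (E * (-ω ^ 2))
          - 2 * η₂ * (-(Real.cos u * (Real.pi / (2 * k t))) * (Real.pi / (2 * k t))) * E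
          - (Real.pi ^ 2 / (4 * (k t) ^ 2) - ω ^ 2)
              * (2 * η₂ * Real.cos (Real.pi * x / (2 * k t)) * E)
          = (Real.sin u * x) * (η₂ * Real.pi * h₂ * ω ^ 2 * E ^ 2 / (k t) ^ 2) := by
        have hkne : k t ≠ 0 := hkpos.ne'
        rw [← hudef]
        field_simp
        ring
      have hpos : 0 ≤ (Real.sin u * x) * (η₂ * Real.pi * h₂ * ω ^ 2 * E ^ 2 / (k t) ^ 2) := by
        apply mul_nonneg hsinx
        positivity
      rw [ge_iff_le, ← sub_nonneg, ← hudef]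
      rw [← hudef] at key
      linarith [key ▸ hpos]
    · rw [hw t x, ← hudef]
      apply mul_nonneg
      · have hle : ω ^ 2 ≤ Real.pi ^ 2 / (4 * (k t) ^ 2) := by
          rw [hω2, div_le_div_iff₀ (by positivity) (by positivity)]
          have h4 : 4 * (k t) ^ 2 ≤ 16 * h₂ ^ 2 := by nlinarith
          nlinarith [mul_le_mul_of_nonneg_left h4 (sq_nonneg Real.pi)]
        linarith
      · positivity
  · -- free boundary condition
    have hwxk : deriv (fun y => w t y) (k t) = -(Real.pi * η₂ * E / k t) := by
      have harg : Real.pi * k t / (2 * k t) = Real.pi / 2 := by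
        field_simp
      rw [(hdx (k t)).deriv, harg, Real.sin_pi_div_two]
      field_simp
    have heq : deriv k t + μ * deriv (fun y => w t y) (k t)
        = E * (Real.pi ^ 2 / (16 * h₂) - Real.pi * μ * η₂ / k t) := by
      rw [hdk.deriv, hwxk, hω2]
      field_simp
      ring
    refine ⟨heq, ?_⟩
    rw [heq]
    have hμη : μ * η₂ ≤ Real.pi / 16 := by
      have h1 : min θ (Real.pi / (8 * μ)) ≤ Real.pi / (8 * μ) := min_le_right _ _
      have h2 : μ * ((1 / 2) * (Real.pi / (8 * μ))) = Real.pi / 16 := by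
        field_simp; ring
      rw [hη₂]; nlinarith
    have hdivle : Real.pi * μ * η₂ / k t ≤ Real.pi ^ 2 / (16 * h₂) := by
      rw [div_le_div_iff₀ hkpos (by positivity)]
      have h3 : Real.pi * (μ * η₂) ≤ Real.pi * (Real.pi / 16) :=
        mul_le_mul_of_nonneg_left hμη hπ.le
      have h4 : Real.pi * μ * η₂ * (16 * h₂) ≤ Real.pi ^ 2 * h₂ := by nlinarith
      have h5 : Real.pi ^ 2 * h₂ ≤ Real.pi ^ 2 * k t := by nlinarith [sq_nonneg Real.pi]
      linarith
    have : 0 ≤ Real.pi ^ 2 / (16 * h₂) - Real.pi * μ * η₂ / k t := by linarith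
    positivity
end

section
/- Let q : [0,Z] → ℝ solve q'' − c q' + f(q) = 0 with q(0)=0, q'(z) > 0 on (0,Z), q'(Z)=0, and let k(t) = Z + ct, and define w(t,x) = q(k(t)−x) for x ∈ [ct, k(t)] and w(t,x) = q(Z) for x ∈ [0, ct]. If f(q(Z)) > 0, then w is C¹ in (t,x), and w satisfies w_t ≤ w_{xx} + f(w) in the classical sense separately on the regions {0 < x < ct} and {ct < x < k(t)}; moreover w(t, k(t)) = 0 and −μ w_x(t, k(t)) = μ q'(0) for all t. -/
open Real Set

open Asymptotics Filter

/-- The truncated travelling profile built from a wave of finite length is a lower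
solution: with `k(t) = Z + ct` and `w(t,x) = q(Z)` for `x ≤ ct`, `w(t,x) = q(k(t)−x)`
for `ct ≤ x ≤ k(t)`, `w` is `C¹` on the relevant region, satisfies
`w_t ≤ w_xx + f(w)` classically on each of `{0 < x < ct}` and `{ct < x < k(t)}`,
and the boundary conditions `w(t,k(t)) = 0`, `−μ w_x(t,k(t)) = μ q'(0)` hold. -/
theorem stmt_18 (f : ℝ → ℝ) (hf : ContDiff ℝ 1 f)
    (Z c μ : ℝ) (hZ : 0 < Z) (hc : 0 < c) (hμ : 0 < μ)
    (q : ℝ → ℝ) (hqC2 : ContDiff ℝ 2 q)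
    (hqode : ∀ z ∈ Icc 0 Z, deriv (deriv q) z - c * deriv q z + f (q z) = 0)
    (hq0 : q 0 = 0) (hq'pos : ∀ z ∈ Ioo 0 Z, 0 < deriv q z)
    (hq'Z : deriv q Z = 0) (hfqZ : 0 < f (q Z))
    (k : ℝ → ℝ) (hk : ∀ t, k t = Z + c * t)
    (w : ℝ → ℝ → ℝ)
    (hw : ∀ t x : ℝ, w t x = if x ≤ c * t then q Z else q (k t - x)) :
    ContDiffOn ℝ 1 (fun p : ℝ × ℝ => w p.1 p.2)
      {p : ℝ × ℝ | 0 < p.1 ∧ 0 ≤ p.2 ∧ p.2 ≤ k p.1} ∧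
    (∀ t : ℝ, 0 < t → ∀ x ∈ Ioo 0 (c * t),
      deriv (fun t' => w t' x) t ≤ deriv (deriv (fun y => w t y)) x + f (w t x)) ∧
    (∀ t : ℝ, 0 < t → ∀ x ∈ Ioo (c * t) (k t),
      deriv (fun t' => w t' x) t ≤ deriv (deriv (fun y => w t y)) x + f (w t x)) ∧
    (∀ t : ℝ, 0 < t → w t (k t) = 0) ∧
    (∀ t : ℝ, 0 < t → -μ * deriv (fun y => w t y) (k t) = μ * deriv q 0) := by
  have hqdiff : Differentiable ℝ q := hqC2.differentiable (by norm_num)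
  have hq'cont : Continuous (deriv q) := hqC2.continuous_deriv (by norm_num)
  have hq'diff : Differentiable ℝ (deriv q) := by
    have := (contDiff_succ_iff_deriv (n := 1)).mp (by exact_mod_cast hqC2)
    exact this.2.2.differentiable (by norm_num)
  set Q : ℝ → ℝ := fun z => q (min z Z) with hQdef
  set D : ℝ → ℝ := fun z => if z ≤ Z then deriv q z else 0 with hDdef
  -- Q has derivative D at the junction point Z
  have hQZ : HasDerivAt Q 0 Z := by
    rw [hasDerivAt_iff_isLittleO]
    have hq'at : HasDerivAt q 0 Z := by
      have := (hqdiff Z).hasDerivAt; rwa [hq'Z] at this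
    have h1 : (fun y => q y - q Z) =o[nhds Z] fun y => y - Z := by
      have := hasDerivAt_iff_isLittleO.mp hq'at
      simpa using this
    have htend : Tendsto (fun y : ℝ => min y Z) (nhds Z) (nhds Z) := by
      have : Continuous fun y : ℝ => min y Z := continuous_id.min continuous_const
      simpa [min_self] using this.tendsto Z
    have h2 := h1.comp_tendsto htend
    have h3 : ((fun y => y - Z) ∘ fun y : ℝ => min y Z) =O[nhds Z] fun y => y - Z := by
      apply isBigO_of_le
      intro y
      simp only [Function.comp]
      rcases le_total y Z with hy | hy
      · rw [min_eq_left hy]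
      · rw [min_eq_right hy]; simp
    have h4 := h2.trans_isBigO h3
    have : ((fun y => q y - q Z) ∘ fun y : ℝ => min y Z)
        = fun y : ℝ => Q y - Q Z - (y - Z) • (0 : ℝ) := by
      funext y; simp [hQdef, min_self, Function.comp]
    rwa [this] at h4
  -- Q has derivative D everywhere
  have hQD : ∀ z : ℝ, HasDerivAt Q (D z) z := by
    intro z
    rcases lt_trichotomy z Z with h | h | h
    · have hev : Q =ᶠ[nhds z] q := by
        filter_upwards [eventually_lt_nhds h] with y hy
        simp [hQdef, min_eq_left hy.le]
      have : HasDerivAt q (deriv q z) z := (hqdiff z).hasDerivAt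
      have := this.congr_of_eventuallyEq hev
      simpa [hDdef, if_pos h.le] using this
    · subst h
      have hD0 : D z = 0 := by simp [hDdef, hq'Z]
      rw [hD0]; exact hQZ
    · have hev : Q =ᶠ[nhds z] fun _ => q Z := by
        filter_upwards [eventually_gt_nhds h] with y hy
        simp [hQdef, min_eq_right (le_of_lt hy)]
      have := (hasDerivAt_const z (q Z)).congr_of_eventuallyEq hev
      simpa [hDdef, if_neg (not_le.mpr h)] using this
  have hDcont : Continuous D := Continuous.if_le hq'cont continuous_const
    continuous_id continuous_const (fun x hx => by rw [hx, hq'Z])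
  have hQ1 : ContDiff ℝ 1 Q := by
    rw [contDiff_one_iff_deriv]
    refine ⟨fun z => (hQD z).differentiableAt, ?_⟩
    have : deriv Q = D := funext fun z => (hQD z).deriv
    rw [this]; exact hDcont
  -- w is Q composed with an affine map
  have hwQ : ∀ t x : ℝ, w t x = Q (Z + c * t - x) := by
    intro t x
    rw [hw, hk]
    split_ifs with h
    · simp [hQdef, min_eq_right (show Z ≤ Z + c * t - x by linarith)]
    · push_neg at h
      simp [hQdef, min_eq_left (show Z + c * t - x ≤ Z by linarith)]
  -- x-derivative of w t
  have hwx : ∀ t : ℝ, deriv (fun y => w t y) = fun y => -D (Z + c * t - y) := by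
    intro t
    funext y
    have hfun : (fun y => w t y) = fun y => Q (Z + c * t - y) := funext fun y => hwQ t y
    rw [hfun]
    have hinner : HasDerivAt (fun y : ℝ => Z + c * t - y) (-1) y := by
      simpa using (hasDerivAt_id y).const_sub (Z + c * t)
    have := ((hQD (Z + c * t - y)).comp y hinner).deriv
    rw [mul_neg_one] at this; exact this
  -- t-derivative of w · x
  have hwt : ∀ t x : ℝ, deriv (fun t' => w t' x) t = D (Z + c * t - x) * c := by
    intro t x
    have hfun : (fun t' => w t' x) = fun t' => Q (Z + c * t' - x) :=
      funext fun t' => hwQ t' x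
    rw [hfun]
    have hinner : HasDerivAt (fun t' : ℝ => Z + c * t' - x) c t := by
      simpa using (((hasDerivAt_id t).const_mul c).const_add Z).sub_const x
    have := ((hQD (Z + c * t - x)).comp t hinner).deriv
    exact this
  refine ⟨?_, ?_, ?_, ?_, ?_⟩
  · -- C¹ regularity
    have h1 : ContDiff ℝ 1 fun p : ℝ × ℝ => Q (Z + c * p.1 - p.2) := by
      apply hQ1.comp; fun_prop
    exact h1.contDiffOn.congr fun p _ => by rw [hwQ]
  · -- region {0 < x < ct}
    intro t ht x hx
    have hz : Z < Z + c * t - x := by have := hx.2; linarith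
    have hwt0 : deriv (fun t' => w t' x) t = 0 := by
      rw [hwt]; simp [hDdef, if_neg (not_le.mpr hz)]
    have hwxx : deriv (deriv (fun y => w t y)) x = 0 := by
      rw [hwx t]
      have hev : (fun y => -D (Z + c * t - y)) =ᶠ[nhds x] fun _ => (0:ℝ) := by
        filter_upwards [eventually_lt_nhds hx.2] with y hy
        simp [hDdef, if_neg (not_le.mpr (show Z < Z + c * t - y by linarith))]
      rw [hev.deriv_eq, deriv_const]
    have hwval : w t x = q Z := by
      rw [hwQ]; simp [hQdef, min_eq_right hz.le]
    rw [hwt0, hwxx, hwval]; linarith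
  · -- region {ct < x < k t}
    intro t ht x hx
    obtain ⟨hx1, hx2⟩ := hx
    rw [hk] at hx2
    set z := Z + c * t - x with hzdef
    have hz0 : 0 < z := by simp [hzdef]; linarith
    have hzZ : z < Z := by simp [hzdef]; linarith
    have hwt1 : deriv (fun t' => w t' x) t = deriv q z * c := by
      rw [hwt]; show D z * c = deriv q z * c; simp [hDdef, if_pos hzZ.le]
    have hwxx : deriv (deriv (fun y => w t y)) x = deriv (deriv q) z := by
      rw [hwx t]
      have hev : (fun y => -D (Z + c * t - y)) =ᶠ[nhds x]
          fun y => -deriv q (Z + c * t - y) := by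
        filter_upwards [eventually_gt_nhds hx1] with y hy
        simp [hDdef, if_pos (show Z + c * t - y ≤ Z by linarith)]
      rw [hev.deriv_eq]
      have hinner : HasDerivAt (fun y : ℝ => Z + c * t - y) (-1) x := by
        simpa using (hasDerivAt_id x).const_sub (Z + c * t)
      have h5 := ((hq'diff z).hasDerivAt.comp x hinner).neg
      have := h5.deriv
      rw [mul_neg_one, neg_neg] at this; exact this
    have hwval : w t x = q z := by
      rw [hwQ]; show q (min z Z) = q z; rw [min_eq_left hzZ.le]
    have hode := hqode z ⟨hz0.le, hzZ.le⟩
    rw [hwt1, hwxx, hwval]; linarith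
  · -- w(t, k t) = 0
    intro t ht
    rw [hwQ, hk]
    have : Z + c * t - (Z + c * t) = 0 := by ring
    rw [this]
    simp [hQdef, min_eq_left hZ.le, hq0]
  · -- Stefan condition
    intro t ht
    rw [hwx t, hk]
    show -μ * -D (Z + c * t - (Z + c * t)) = μ * deriv q 0
    have h0 : Z + c * t - (Z + c * t) = 0 := by ring
    rw [h0]
    simp [hDdef, if_pos hZ.le]
end

section
/- Let f be C¹ with f(0) = 0 and f'(0) < 0 (e.g. f bistable), and let Z_n ↓ Z_B > 0 be a sequence such that for each n the problem v'' + f(v) = 0 on (−Z_n, Z_n), v(±Z_n) = 0, has a positive solution v_n with 0 < v_n < 1. Then, after passing to a subsequence, the rescaled functions V_n(x) = v_n(Z_n x) converge in C¹([−1,1]) to a nonnegative solution V* of V'' + Z_B² f(V) = 0 on (−1,1) with V(±1) = 0, and V* is not identically zero; hence the limit problem on (−Z_B, Z_B) has a positive solution. -/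
set_option maxHeartbeats 2000000
set_option synthInstance.maxHeartbeats 400000

open Real Set Filter BoundedContinuousFunction MeasureTheory

private lemma hasDerivAt_comp_const_mul' {g : ℝ → ℝ} (hg : Differentiable ℝ g) (c x : ℝ) :
    HasDerivAt (fun y => g (c * y)) (c * deriv g (c * x)) x := by
  have h1 : HasDerivAt (fun y : ℝ => c * y) c x := by simpa using (hasDerivAt_id x).const_mul c
  have h2 := (hg (c * x)).hasDerivAt
  exact (h2.comp x h1).congr_deriv (mul_comm _ _)

private lemma deriv_comp_const_mul' {g : ℝ → ℝ} (hg : Differentiable ℝ g) (c : ℝ) :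
    deriv (fun y => g (c * y)) = fun x => c * deriv g (c * x) :=
  funext fun x => (hasDerivAt_comp_const_mul' hg c x).deriv

private lemma contDiff_two_of_deriv' {V : ℝ → ℝ} (h1 : Differentiable ℝ V)
    (h2 : Differentiable ℝ (deriv V)) (h3 : Continuous (deriv (deriv V))) :
    ContDiff ℝ 2 V := by
  rw [show (2 : WithTop ℕ∞) = 1 + 1 by norm_num, contDiff_succ_iff_deriv]
  refine ⟨h1, by simp, ?_⟩
  rw [contDiff_one_iff_deriv]
  exact ⟨h2, h3⟩

private lemma ftc_cont {g : ℝ → ℝ} (hg : Continuous g) (x : ℝ) :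
    HasDerivAt (fun u => ∫ t in (0:ℝ)..u, g t) (g x) x :=
  intervalIntegral.integral_hasDerivAt_right (hg.intervalIntegrable 0 x)
    (hg.stronglyMeasurableAtFilter volume (nhds x)) hg.continuousAt

private lemma neg_near_zero' {f : ℝ → ℝ} (hf : ContDiff ℝ 1 f) (hf0 : f 0 = 0)
    (h' : deriv f 0 < 0) : ∃ δ > 0, ∀ s : ℝ, 0 < s → s < δ → f s < 0 := by
  have hd : HasDerivAt f (deriv f 0) 0 := (hf.differentiable one_ne_zero 0).hasDerivAt
  have hs := hasDerivAt_iff_tendsto_slope.mp hd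
  have hev : ∀ᶠ z in nhdsWithin (0:ℝ) {(0:ℝ)}ᶜ, slope f 0 z < 0 :=
    (tendsto_order.1 hs).2 0 h'
  have hev' : ∀ᶠ z in nhdsWithin (0:ℝ) (Ioi 0), slope f 0 z < 0 :=
    hev.filter_mono (nhdsWithin_mono 0 (fun z hz => ne_of_gt hz))
  obtain ⟨δ, hδ, hsub⟩ := mem_nhdsGT_iff_exists_Ioo_subset.mp hev'
  refine ⟨δ, hδ, fun s hs0 hsδ => ?_⟩
  have h1 : slope f 0 s < 0 := hsub ⟨hs0, hsδ⟩
  rw [slope_def_field] at h1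
  have h2 : (f s - f 0) / (s - 0) * s < 0 := mul_neg_of_neg_of_pos h1 hs0
  rw [hf0, sub_zero, sub_zero, div_mul_cancel₀ _ (ne_of_gt hs0)] at h2
  exact h2

private lemma eq_on_Ioo' {p q d : ℝ → ℝ}
    (hp : ∀ x ∈ Ioo (-1:ℝ) 1, HasDerivAt p (d x) x)
    (hq : ∀ x ∈ Ioo (-1:ℝ) 1, HasDerivAt q (d x) x)
    (h0 : p 0 = q 0) : ∀ x ∈ Ioo (-1:ℝ) 1, p x = q x := by
  intro x hx
  have hr : ∀ y ∈ Ioo (-1:ℝ) 1, HasDerivAt (fun t => p t - q t) 0 y := fun y hy => by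
    exact ((hp y hy).sub (hq y hy)).congr_deriv (sub_self _)
  rcases le_total 0 x with h | h
  · have sub : Icc (0:ℝ) x ⊆ Ioo (-1) 1 := fun t ht =>
      ⟨by linarith [ht.1], lt_of_le_of_lt ht.2 hx.2⟩
    have hc := constant_of_has_deriv_right_zero (f := fun t => p t - q t) (a := 0) (b := x)
      (fun t ht => ((hr t (sub ht)).continuousAt.continuousWithinAt))
      (fun t ht => (hr t (sub (Ico_subset_Icc_self ht))).hasDerivWithinAt)
    have := hc x ⟨h, le_rfl⟩
    simp only [h0] at this
    linarith [this]
  · have sub : Icc x (0:ℝ) ⊆ Ioo (-1) 1 := fun t ht =>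
      ⟨lt_of_lt_of_le hx.1 ht.1, by linarith [ht.2]⟩
    have hc := constant_of_has_deriv_right_zero (f := fun t => p t - q t) (a := x) (b := 0)
      (fun t ht => ((hr t (sub ht)).continuousAt.continuousWithinAt))
      (fun t ht => (hr t (sub (Ico_subset_Icc_self ht))).hasDerivWithinAt)
    have := hc 0 ⟨h, le_rfl⟩
    simp only [h0] at this
    linarith [this]

/-- Compactness step of Lemma 4.1: positive solutions on shrinking intervals
`(−Zₙ, Zₙ)` with `Zₙ ↓ Z_B` converge (after rescaling and passing to a subsequence,
in `C¹([−1,1])`) to a nontrivial nonnegative solution of the rescaled limit problem,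
whence the problem on `(−Z_B, Z_B)` has a positive solution. -/
theorem stmt_19 (f : ℝ → ℝ) (hf : ContDiff ℝ 1 f)
    (hf0 : f 0 = 0) (hf'0 : deriv f 0 < 0)
    (ZB : ℝ) (hZB : 0 < ZB)
    (Zn : ℕ → ℝ) (hZn_anti : StrictAnti Zn)
    (hZn_gt : ∀ n, ZB < Zn n) (hZn_lim : Tendsto Zn atTop (nhds ZB))
    (vn : ℕ → ℝ → ℝ) (hvnC2 : ∀ n, ContDiff ℝ 2 (vn n))
    (hvn_ode : ∀ n, ∀ x ∈ Ioo (-(Zn n)) (Zn n),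
      deriv (deriv (vn n)) x + f (vn n x) = 0)
    (hvn_pos : ∀ n, ∀ x ∈ Ioo (-(Zn n)) (Zn n), 0 < vn n x ∧ vn n x < 1)
    (hvn_bc : ∀ n, vn n (Zn n) = 0 ∧ vn n (-(Zn n)) = 0) :
    (∃ φ : ℕ → ℕ, StrictMono φ ∧
      ∃ V : ℝ → ℝ, ContDiff ℝ 2 V ∧
        TendstoUniformlyOn (fun j x => vn (φ j) (Zn (φ j) * x)) V atTop
          (Icc (-1) 1) ∧
        TendstoUniformlyOn
          (fun j x => deriv (fun y => vn (φ j) (Zn (φ j) * y)) x) (deriv V) atTop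
          (Icc (-1) 1) ∧
        (∀ x ∈ Ioo (-1:ℝ) 1,
          deriv (deriv V) x + ZB ^ 2 * f (V x) = 0 ∧ 0 ≤ V x) ∧
        V 1 = 0 ∧ V (-1) = 0 ∧
        (∃ x ∈ Ioo (-1:ℝ) 1, V x ≠ 0)) ∧
    ∃ v : ℝ → ℝ, ContDiff ℝ 2 v ∧
      (∀ x ∈ Ioo (-ZB) ZB, deriv (deriv v) x + f (v x) = 0 ∧ 0 < v x) ∧
      v ZB = 0 ∧ v (-ZB) = 0 := by
  -- ### basic facts
  have hZpos : ∀ n, 0 < Zn n := fun n => hZB.trans (hZn_gt n)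
  have hZle : ∀ n, Zn n ≤ Zn 0 := fun n => hZn_anti.antitone (Nat.zero_le n)
  have hZ0pos : 0 < Zn 0 := hZpos 0
  obtain ⟨M0, hM0⟩ := (isCompact_Icc (a := (0:ℝ)) (b := 1)).exists_bound_of_continuousOn
      (hf.continuous.continuousOn)
  set M : ℝ := max M0 1 with hMdef
  have hM1 : (1:ℝ) ≤ M := le_max_right _ _
  have hMpos : (0:ℝ) < M := lt_of_lt_of_le one_pos hM1
  have hM : ∀ s ∈ Icc (0:ℝ) 1, |f s| ≤ M := fun s hs => le_trans (hM0 s hs) (le_max_left _ _)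
  have hv01 : ∀ n, ∀ y ∈ Icc (-(Zn n)) (Zn n), vn n y ∈ Icc (0:ℝ) 1 := by
    intro n y hy
    rcases eq_or_lt_of_le hy.1 with h | h
    · rw [← h, (hvn_bc n).2]; exact ⟨le_rfl, zero_le_one⟩
    rcases eq_or_lt_of_le hy.2 with h2 | h2
    · rw [h2, (hvn_bc n).1]; exact ⟨le_rfl, zero_le_one⟩
    · have := hvn_pos n y ⟨h, h2⟩
      exact ⟨le_of_lt this.1, le_of_lt this.2⟩
  have hvcont : ∀ n, Continuous (vn n) := fun n => (hvnC2 n).continuous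
  have hvdiff : ∀ n, Differentiable ℝ (vn n) := fun n => (hvnC2 n).differentiable two_ne_zero
  have hvC1d : ∀ n, ContDiff ℝ 1 (deriv (vn n)) := by
    intro n
    have h := hvnC2 n
    rw [show (2 : WithTop ℕ∞) = 1 + 1 by norm_num, contDiff_succ_iff_deriv] at h
    exact h.2.2
  have hvd1diff : ∀ n, Differentiable ℝ (deriv (vn n)) := fun n => (hvC1d n).differentiable one_ne_zero
  have hvd2cont : ∀ n, Continuous (deriv (deriv (vn n))) :=
    fun n => (hvC1d n).continuous_deriv le_rfl
  have hode' : ∀ n, ∀ y ∈ Ioo (-(Zn n)) (Zn n), deriv (deriv (vn n)) y = -f (vn n y) := by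
    intro n y hy; have := hvn_ode n y hy; linarith
  have hd2bd : ∀ n, ∀ y ∈ Icc (-(Zn n)) (Zn n), |deriv (deriv (vn n)) y| ≤ M := by
    intro n
    have hne : -(Zn n) ≠ Zn n := by have := hZpos n; intro h; linarith [congrArg id h]
    have hcl : Icc (-(Zn n)) (Zn n) = closure (Ioo (-(Zn n)) (Zn n)) := (closure_Ioo hne).symm
    have hclosed : IsClosed {y : ℝ | |deriv (deriv (vn n)) y| ≤ M} :=
      isClosed_le (continuous_abs.comp (hvd2cont n)) continuous_const
    intro y hy
    rw [hcl] at hy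
    refine hclosed.closure_subset_iff.mpr ?_ hy
    intro z hz
    rw [mem_setOf_eq, hode' n z hz, abs_neg]
    exact hM _ (hv01 n z (Ioo_subset_Icc_self hz))
  have hrolle : ∀ n, ∃ c ∈ Ioo (-(Zn n)) (Zn n), deriv (vn n) c = 0 := by
    intro n
    refine exists_deriv_eq_zero (by linarith [hZpos n]) ((hvcont n).continuousOn) ?_
    rw [(hvn_bc n).2, (hvn_bc n).1]
  have hd1bd : ∀ n, ∀ y ∈ Icc (-(Zn n)) (Zn n), |deriv (vn n) y| ≤ M * (2 * Zn 0) := by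
    intro n y hy
    obtain ⟨c, hc, hc0⟩ := hrolle n
    have hcIcc : c ∈ Icc (-(Zn n)) (Zn n) := Ioo_subset_Icc_self hc
    have hmvt := Convex.norm_image_sub_le_of_norm_deriv_le (f := deriv (vn n))
      (fun x _ => (hvd1diff n) x)
      (fun x hx => by rw [Real.norm_eq_abs]; exact hd2bd n x hx) (convex_Icc _ _) hcIcc hy
    rw [hc0, sub_zero, Real.norm_eq_abs, Real.norm_eq_abs] at hmvt
    have h1 : |y| ≤ Zn n := abs_le.mpr ⟨by linarith [hy.1], hy.2⟩
    have h2 : |c| ≤ Zn n := abs_le.mpr ⟨by linarith [hcIcc.1], hcIcc.2⟩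
    have h3 : |y - c| ≤ 2 * Zn 0 := by
      have := abs_sub y c
      linarith [hZle n]
    calc |deriv (vn n) y| ≤ M * |y - c| := hmvt
      _ ≤ M * (2 * Zn 0) := by nlinarith
  -- ### rescaled functions
  have hmapIcc : ∀ n, ∀ x ∈ Icc (-1:ℝ) 1, Zn n * x ∈ Icc (-(Zn n)) (Zn n) := by
    intro n x hx
    constructor
    · nlinarith [hZpos n, hx.1, hx.2]
    · nlinarith [hZpos n, hx.1, hx.2]
  have hmapIoo : ∀ n, ∀ x ∈ Ioo (-1:ℝ) 1, Zn n * x ∈ Ioo (-(Zn n)) (Zn n) := by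
    intro n x hx
    constructor
    · nlinarith [hZpos n, hx.1, hx.2]
    · nlinarith [hZpos n, hx.1, hx.2]
  have hVC2 : ∀ n, ContDiff ℝ 2 (fun y => vn n (Zn n * y)) :=
    fun n => (hvnC2 n).comp (contDiff_const.mul contDiff_id)
  have hVd : ∀ n, deriv (fun y => vn n (Zn n * y)) = fun x => Zn n * deriv (vn n) (Zn n * x) :=
    fun n => deriv_comp_const_mul' (hvdiff n) (Zn n)
  have hVd1diff : ∀ n, Differentiable ℝ (deriv (fun y => vn n (Zn n * y))) := by
    intro n
    rw [hVd n]
    exact fun x => (((hvd1diff n).comp (differentiable_id.const_mul (Zn n))).const_mul (Zn n)) x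
  have hVdd : ∀ n, deriv (deriv (fun y => vn n (Zn n * y)))
      = fun x => Zn n * (Zn n * deriv (deriv (vn n)) (Zn n * x)) := by
    intro n
    rw [hVd n]
    funext x
    have h1 : deriv (fun y => deriv (vn n) (Zn n * y))
        = fun x => Zn n * deriv (deriv (vn n)) (Zn n * x) :=
      deriv_comp_const_mul' (hvd1diff n) (Zn n)
    rw [deriv_const_mul (Zn n)
      ((hasDerivAt_comp_const_mul' (hvd1diff n) (Zn n) x).differentiableAt), h1]
  have hVcont : ∀ n, Continuous (fun y => vn n (Zn n * y)) := fun n => (hVC2 n).continuous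
  have hVdcont : ∀ n, Continuous (deriv (fun y => vn n (Zn n * y))) :=
    fun n => (hVC2 n).continuous_deriv one_le_two
  have hVode : ∀ n, ∀ x ∈ Ioo (-1:ℝ) 1,
      deriv (deriv (fun y => vn n (Zn n * y))) x = -(Zn n ^ 2 * f (vn n (Zn n * x))) := by
    intro n x hx
    rw [hVdd n]
    simp only
    rw [hode' n _ (hmapIoo n x hx)]
    ring
  set C1 : ℝ := Zn 0 * (M * (2 * Zn 0)) with hC1def
  set C2 : ℝ := Zn 0 * (Zn 0 * M) with hC2def
  have hC1pos : 0 < C1 := by positivity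
  have hC2pos : 0 < C2 := by positivity
  have hVdbd : ∀ n, ∀ x ∈ Icc (-1:ℝ) 1, |deriv (fun y => vn n (Zn n * y)) x| ≤ C1 := by
    intro n x hx
    rw [hVd n]
    simp only
    rw [abs_mul, abs_of_pos (hZpos n)]
    have h1 := hd1bd n _ (hmapIcc n x hx)
    have h2 := hZle n
    have h3 := hZpos n
    nlinarith [abs_nonneg (deriv (vn n) (Zn n * x))]
  have hVddbd : ∀ n, ∀ x ∈ Icc (-1:ℝ) 1,
      |deriv (deriv (fun y => vn n (Zn n * y))) x| ≤ C2 := by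
    intro n x hx
    rw [hVdd n]
    simp only
    rw [abs_mul, abs_mul, abs_of_pos (hZpos n)]
    have h1 := hd2bd n _ (hmapIcc n x hx)
    have h2 := hZle n
    have h3 := hZpos n
    have hinner : Zn n * |deriv (deriv (vn n)) (Zn n * x)| ≤ Zn 0 * M :=
      mul_le_mul h2 h1 (abs_nonneg _) (le_of_lt hZ0pos)
    calc Zn n * (Zn n * |deriv (deriv (vn n)) (Zn n * x)|) ≤ Zn 0 * (Zn 0 * M) :=
          mul_le_mul h2 hinner (by positivity) (le_of_lt hZ0pos)
      _ = C2 := rfl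
  -- ### Arzela-Ascoli
  set u : ℕ → (Icc (-1:ℝ) 1 →ᵇ (ℝ × ℝ)) := fun n => BoundedContinuousFunction.mkOfCompact
    ⟨fun x => (vn n (Zn n * x.1), deriv (fun y => vn n (Zn n * y)) x.1),
      (((hVcont n).comp continuous_subtype_val).prodMk
        ((hVdcont n).comp continuous_subtype_val))⟩ with hudef
  have hu : ∀ n (x : Icc (-1:ℝ) 1),
      u n x = (vn n (Zn n * x.1), deriv (fun y => vn n (Zn n * y)) x.1) := fun n x => rfl
  have hin : ∀ n (x : Icc (-1:ℝ) 1), u n x ∈ (Icc (-1:ℝ) 1 ×ˢ Icc (-C1) C1) := by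
    intro n x
    rw [hu]
    constructor
    · have := hv01 n _ (hmapIcc n x.1 x.2)
      exact ⟨by linarith [this.1], this.2⟩
    · exact abs_le.mp (hVdbd n x.1 x.2)
  set Cl : ℝ := max C1 C2 with hCldef
  have hlip : ∀ n (x y : Icc (-1:ℝ) 1), dist (u n x) (u n y) ≤ Cl * dist x y := by
    intro n x y
    rw [hu, hu, Prod.dist_eq, Subtype.dist_eq]
    have hmvt1 := Convex.norm_image_sub_le_of_norm_deriv_le (f := fun y => vn n (Zn n * y))
      (fun z _ => ((hVC2 n).differentiable two_ne_zero) z)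
      (fun z hz => by rw [Real.norm_eq_abs]; exact hVdbd n z hz) (convex_Icc _ _) y.2 x.2
    have hmvt2 := Convex.norm_image_sub_le_of_norm_deriv_le
      (f := deriv (fun y => vn n (Zn n * y)))
      (fun z _ => (hVd1diff n) z)
      (fun z hz => by rw [Real.norm_eq_abs]; exact hVddbd n z hz) (convex_Icc _ _) y.2 x.2
    apply max_le
    · calc dist (vn n (Zn n * x.1)) (vn n (Zn n * y.1))
          ≤ C1 * ‖x.1 - y.1‖ := by rw [Real.dist_eq, ← Real.norm_eq_abs]; exact hmvt1
        _ ≤ Cl * dist x.1 y.1 := by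
            rw [Real.dist_eq, ← Real.norm_eq_abs]
            exact mul_le_mul_of_nonneg_right (le_max_left _ _) (norm_nonneg _)
    · calc dist (deriv (fun y => vn n (Zn n * y)) x.1) (deriv (fun y => vn n (Zn n * y)) y.1)
          ≤ C2 * ‖x.1 - y.1‖ := by rw [Real.dist_eq, ← Real.norm_eq_abs]; exact hmvt2
        _ ≤ Cl * dist x.1 y.1 := by
            rw [Real.dist_eq, ← Real.norm_eq_abs]
            exact mul_le_mul_of_nonneg_right (le_max_right _ _) (norm_nonneg _)
  have hK : IsCompact (Icc (-1:ℝ) 1 ×ˢ Icc (-C1) C1) := isCompact_Icc.prod isCompact_Icc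
  have hEq : Equicontinuous ((↑) : range u → (Icc (-1:ℝ) 1 → ℝ × ℝ)) := by
    apply Metric.equicontinuous_of_continuity_modulus (fun d => Cl * d)
    · have h : Tendsto (fun d : ℝ => Cl * d) (nhds 0) (nhds (Cl * 0)) :=
        (continuous_const.mul continuous_id).tendsto 0
      simpa using h
    · rintro x y ⟨g, n, rfl⟩
      exact hlip n x y
  have hcomp := BoundedContinuousFunction.arzela_ascoli _ hK (range u)
    (fun g x hg => by obtain ⟨n, rfl⟩ := hg; exact hin n x) hEq
  obtain ⟨W, _, φ, hφ, hWlim⟩ := hcomp.tendsto_subseq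
    (fun n => subset_closure (mem_range_self n))
  have hdist : Tendsto (fun j => dist (u (φ j)) W) atTop (nhds 0) :=
    tendsto_iff_dist_tendsto_zero.mp hWlim
  -- ### limit functions
  set W1 : ℝ → ℝ := fun x => (W (Set.projIcc (-1) 1 (by norm_num) x)).1 with hW1def
  set W2 : ℝ → ℝ := fun x => (W (Set.projIcc (-1) 1 (by norm_num) x)).2 with hW2def
  have hW1cont : Continuous W1 := (W.continuous.comp continuous_projIcc).fst
  have hW2cont : Continuous W2 := (W.continuous.comp continuous_projIcc).snd
  have hW1at : ∀ x (hx : x ∈ Icc (-1:ℝ) 1), W1 x = (W ⟨x, hx⟩).1 := by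
    intro x hx
    rw [hW1def]
    simp only
    rw [projIcc_of_mem _ hx]
  have hW2at : ∀ x (hx : x ∈ Icc (-1:ℝ) 1), W2 x = (W ⟨x, hx⟩).2 := by
    intro x hx
    rw [hW2def]
    simp only
    rw [projIcc_of_mem _ hx]
  have key : ∀ ε > (0:ℝ), ∀ᶠ j in atTop, ∀ x ∈ Icc (-1:ℝ) 1,
      dist (W1 x) (vn (φ j) (Zn (φ j) * x)) < ε ∧
      dist (W2 x) (deriv (fun y => vn (φ j) (Zn (φ j) * y)) x) < ε := by
    intro ε hε
    filter_upwards [hdist.eventually (gt_mem_nhds hε)] with j hj x hx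
    have h1 : dist (u (φ j) ⟨x, hx⟩) (W ⟨x, hx⟩) ≤ dist (u (φ j)) W :=
      BoundedContinuousFunction.dist_coe_le_dist _
    constructor
    · rw [hW1at x hx]
      calc dist (W ⟨x, hx⟩).1 (vn (φ j) (Zn (φ j) * x))
          ≤ dist (W ⟨x, hx⟩) (u (φ j) ⟨x, hx⟩) := by
            rw [hu, Prod.dist_eq]; exact le_max_left _ _
        _ = dist (u (φ j) ⟨x, hx⟩) (W ⟨x, hx⟩) := dist_comm _ _
        _ ≤ dist (u (φ j)) W := h1
        _ < ε := hj
    · rw [hW2at x hx]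
      calc dist (W ⟨x, hx⟩).2 (deriv (fun y => vn (φ j) (Zn (φ j) * y)) x)
          ≤ dist (W ⟨x, hx⟩) (u (φ j) ⟨x, hx⟩) := by
            rw [hu, Prod.dist_eq]; exact le_max_right _ _
        _ = dist (u (φ j) ⟨x, hx⟩) (W ⟨x, hx⟩) := dist_comm _ _
        _ ≤ dist (u (φ j)) W := h1
        _ < ε := hj
  have hU1 : TendstoUniformlyOn (fun j x => vn (φ j) (Zn (φ j) * x)) W1 atTop
      (Icc (-1:ℝ) 1) := by
    rw [Metric.tendstoUniformlyOn_iff]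
    intro ε hε
    filter_upwards [key ε hε] with j hj x hx
    exact (hj x hx).1
  have hU2 : TendstoUniformlyOn (fun j x => deriv (fun y => vn (φ j) (Zn (φ j) * y)) x) W2
      atTop (Icc (-1:ℝ) 1) := by
    rw [Metric.tendstoUniformlyOn_iff]
    intro ε hε
    filter_upwards [key ε hε] with j hj x hx
    exact (hj x hx).2
  -- ### properties of the limit
  have hW1mem : ∀ x ∈ Icc (-1:ℝ) 1, W1 x ∈ Icc (0:ℝ) 1 := by
    intro x hx
    exact isClosed_Icc.mem_of_tendsto (hU1.tendsto_at hx)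
      (Filter.Eventually.of_forall fun j => hv01 _ _ (hmapIcc _ x hx))
  have hW1one : W1 1 = 0 := by
    have h1 : Tendsto (fun j => vn (φ j) (Zn (φ j) * 1)) atTop (nhds (W1 1)) :=
      hU1.tendsto_at (right_mem_Icc.mpr (by norm_num))
    have h2 : Tendsto (fun j => vn (φ j) (Zn (φ j) * 1)) atTop (nhds 0) := by
      have : ∀ j, vn (φ j) (Zn (φ j) * 1) = 0 := fun j => by
        rw [mul_one]; exact (hvn_bc (φ j)).1
      exact tendsto_const_nhds.congr fun j => (this j).symm
    exact tendsto_nhds_unique h1 h2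
  have hW1negone : W1 (-1) = 0 := by
    have h1 : Tendsto (fun j => vn (φ j) (Zn (φ j) * (-1))) atTop (nhds (W1 (-1))) :=
      hU1.tendsto_at (left_mem_Icc.mpr (by norm_num))
    have h2 : Tendsto (fun j => vn (φ j) (Zn (φ j) * (-1))) atTop (nhds 0) := by
      have : ∀ j, vn (φ j) (Zn (φ j) * (-1)) = 0 := fun j => by
        rw [mul_neg_one]; exact (hvn_bc (φ j)).2
      exact tendsto_const_nhds.congr fun j => (this j).symm
    exact tendsto_nhds_unique h1 h2
  have hZφ : Tendsto (fun j => Zn (φ j)) atTop (nhds ZB) := hZn_lim.comp hφ.tendsto_atTop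
  have hZφ2 : Tendsto (fun j => Zn (φ j) ^ 2) atTop (nhds (ZB ^ 2)) := hZφ.pow 2
  have hUg : TendstoUniformlyOn (fun j x => -(Zn (φ j) ^ 2 * f (vn (φ j) (Zn (φ j) * x))))
      (fun x => -(ZB ^ 2 * f (W1 x))) atTop (Icc (-1:ℝ) 1) := by
    rw [Metric.tendstoUniformlyOn_iff]
    intro ε hε
    have hZ02 : (0:ℝ) < Zn 0 ^ 2 := by positivity
    set ε₁ : ℝ := ε / (2 * (Zn 0 ^ 2 + 1)) with hε₁def
    have hε₁ : 0 < ε₁ := by positivity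
    set ε₂ : ℝ := ε / (2 * (M + 1)) with hε₂def
    have hε₂ : 0 < ε₂ := by positivity
    have he1 : ε₁ * (Zn 0 ^ 2 + 1) = ε / 2 := by
      rw [hε₁def]; field_simp
    have he2 : ε₂ * (M + 1) = ε / 2 := by
      rw [hε₂def]; field_simp
    obtain ⟨δ, hδ0, hδ⟩ := Metric.uniformContinuousOn_iff.mp
      (isCompact_Icc.uniformContinuousOn_of_continuous (hf.continuous.continuousOn)) ε₁ hε₁
    have hev1 := Metric.tendstoUniformlyOn_iff.mp hU1 δ hδ0
    have hev2 : ∀ᶠ j in atTop, |Zn (φ j) ^ 2 - ZB ^ 2| < ε₂ := by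
      have h := Metric.tendsto_nhds.mp hZφ2 ε₂ hε₂
      filter_upwards [h] with j hj
      rwa [Real.dist_eq] at hj
    filter_upwards [hev1, hev2] with j h1 h2 x hx
    have hWx := hW1mem x hx
    have hVx : vn (φ j) (Zn (φ j) * x) ∈ Icc (0:ℝ) 1 := hv01 _ _ (hmapIcc _ x hx)
    have hd : dist (f (W1 x)) (f (vn (φ j) (Zn (φ j) * x))) < ε₁ := hδ _ hWx _ hVx (h1 x hx)
    rw [Real.dist_eq] at hd
    have hfW : |f (W1 x)| ≤ M := hM _ hWx
    have hZj2 : Zn (φ j) ^ 2 ≤ Zn 0 ^ 2 := by nlinarith [hZle (φ j), hZpos (φ j)]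
    have h2' : |ZB ^ 2 - Zn (φ j) ^ 2| < ε₂ := by rw [abs_sub_comm]; exact h2
    calc dist (-(ZB ^ 2 * f (W1 x))) (-(Zn (φ j) ^ 2 * f (vn (φ j) (Zn (φ j) * x))))
        = |ZB ^ 2 * f (W1 x) - Zn (φ j) ^ 2 * f (vn (φ j) (Zn (φ j) * x))| := by
          rw [dist_neg_neg, Real.dist_eq]
      _ ≤ |ZB ^ 2 - Zn (φ j) ^ 2| * |f (W1 x)|
          + Zn (φ j) ^ 2 * |f (W1 x) - f (vn (φ j) (Zn (φ j) * x))| := by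
          have hre : ZB ^ 2 * f (W1 x) - Zn (φ j) ^ 2 * f (vn (φ j) (Zn (φ j) * x))
              = (ZB ^ 2 - Zn (φ j) ^ 2) * f (W1 x)
                + Zn (φ j) ^ 2 * (f (W1 x) - f (vn (φ j) (Zn (φ j) * x))) := by ring
          rw [hre]
          refine (abs_add_le _ _).trans ?_
          rw [abs_mul, abs_mul, abs_of_nonneg (sq_nonneg (Zn (φ j)))]
      _ < ε := by
          have t1 : |ZB ^ 2 - Zn (φ j) ^ 2| * |f (W1 x)| < ε₂ * M := by
            apply lt_of_le_of_lt (mul_le_mul_of_nonneg_left hfW (abs_nonneg _))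
            exact mul_lt_mul_of_pos_right h2' hMpos
          have t2 : Zn (φ j) ^ 2 * |f (W1 x) - f (vn (φ j) (Zn (φ j) * x))| < Zn 0 ^ 2 * ε₁ := by
            apply lt_of_le_of_lt (mul_le_mul_of_nonneg_right hZj2 (abs_nonneg _))
            exact mul_lt_mul_of_pos_left hd hZ02
          have t3 : ε₂ * M < ε / 2 := by
            rw [← he2]
            have := mul_lt_mul_of_pos_left (show M < M + 1 by linarith) hε₂
            linarith [this]
          have t4 : Zn 0 ^ 2 * ε₁ < ε / 2 := by
            rw [← he1]
            nlinarith [hε₁]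
          linarith
  have hW1' : ∀ x ∈ Ioo (-1:ℝ) 1, HasDerivAt W1 (W2 x) x := by
    intro x hx
    refine hasDerivAt_of_tendstoUniformlyOn isOpen_Ioo (hU2.mono Ioo_subset_Icc_self)
      (Filter.Eventually.of_forall fun j y _ => ?_)
      (fun y hy => hU1.tendsto_at (Ioo_subset_Icc_self hy)) hx
    exact (((hVC2 (φ j)).differentiable two_ne_zero) y).hasDerivAt
  have hU2' : TendstoUniformlyOn (fun j x => deriv (deriv (fun y => vn (φ j) (Zn (φ j) * y))) x)
      (fun x => -(ZB ^ 2 * f (W1 x))) atTop (Ioo (-1:ℝ) 1) :=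
    (hUg.mono Ioo_subset_Icc_self).congr
      (Filter.Eventually.of_forall fun j x hx => (hVode (φ j) x hx).symm)
  have hW2' : ∀ x ∈ Ioo (-1:ℝ) 1, HasDerivAt W2 (-(ZB ^ 2 * f (W1 x))) x := by
    intro x hx
    refine hasDerivAt_of_tendstoUniformlyOn isOpen_Ioo hU2'
      (Filter.Eventually.of_forall fun j y _ => ?_)
      (fun y hy => hU2.tendsto_at (Ioo_subset_Icc_self hy)) hx
    exact ((hVd1diff (φ j)) y).hasDerivAt
  -- ### construction of V
  set g : ℝ → ℝ := fun t => -(ZB ^ 2 * f (W1 t)) with hgdef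
  have hgcont : Continuous g := (continuous_const.mul (hf.continuous.comp hW1cont)).neg
  set G : ℝ → ℝ := fun x => ∫ t in (0:ℝ)..x, g t with hGdef
  have hG : ∀ x, HasDerivAt G (g x) x := ftc_cont hgcont
  have hGcont : Continuous G :=
    Differentiable.continuous (fun x => (hG x).differentiableAt)
  set Hh : ℝ → ℝ := fun x => ∫ t in (0:ℝ)..x, t * g t with hHdef
  have hH : ∀ x, HasDerivAt Hh (x * g x) x := fun x => ftc_cont (continuous_id.mul hgcont) x
  set V : ℝ → ℝ := fun x => W1 0 + W2 0 * x + (x * G x - Hh x) with hVdef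
  have hV' : ∀ x, HasDerivAt V (W2 0 + G x) x := by
    intro x
    have h1 : HasDerivAt (fun x : ℝ => W1 0 + W2 0 * x + (x * G x - Hh x))
        (0 + W2 0 * 1 + ((1 * G x + x * g x) - x * g x)) x :=
      ((hasDerivAt_const x (W1 0)).add ((hasDerivAt_id x).const_mul (W2 0))).add
        (((hasDerivAt_id x).mul (hG x)).sub (hH x))
    rw [hVdef]
    convert h1 using 1
    ring
  have hdV : deriv V = fun x => W2 0 + G x := funext fun x => (hV' x).deriv
  have hV'' : ∀ x, HasDerivAt (deriv V) (g x) x := by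
    intro x
    rw [hdV]
    exact ((hasDerivAt_const x (W2 0)).add (hG x)).congr_deriv (zero_add _)
  have hddV : deriv (deriv V) = g := funext fun x => (hV'' x).deriv
  have hVdiff : Differentiable ℝ V := fun x => (hV' x).differentiableAt
  have hVC2' : ContDiff ℝ 2 V := contDiff_two_of_deriv' hVdiff
    (fun x => (hV'' x).differentiableAt) (by rw [hddV]; exact hgcont)
  -- V agrees with W1 on the interval
  have hG0 : G 0 = 0 := intervalIntegral.integral_same
  have hH0 : Hh 0 = 0 := intervalIntegral.integral_same
  have hdVW2 : ∀ x ∈ Ioo (-1:ℝ) 1, deriv V x = W2 x := by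
    apply eq_on_Ioo' (d := g)
    · exact fun x _ => hV'' x
    · exact fun x hx => hW2' x hx
    · rw [hdV]
      simp [hG0]
  have hVW1 : ∀ x ∈ Ioo (-1:ℝ) 1, V x = W1 x := by
    apply eq_on_Ioo' (d := W2)
    · intro x hx
      have h2 : W2 x = W2 0 + G x := by rw [← hdVW2 x hx, hdV]
      rw [h2]
      exact hV' x
    · exact hW1'
    · rw [hVdef]
      simp [hG0, hH0]
  have hVW1Icc : EqOn V W1 (Icc (-1:ℝ) 1) := by
    have h1 : EqOn V W1 (Ioo (-1:ℝ) 1) := fun x hx => hVW1 x hx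
    have h2 := h1.closure (hVC2'.continuous) hW1cont
    rwa [closure_Ioo (by norm_num : (-1:ℝ) ≠ 1)] at h2
  have hdVW2Icc : EqOn (deriv V) W2 (Icc (-1:ℝ) 1) := by
    have h1 : EqOn (deriv V) W2 (Ioo (-1:ℝ) 1) := fun x hx => hdVW2 x hx
    have hdVcont : Continuous (deriv V) := by
      rw [hdV]; exact continuous_const.add hGcont
    have h2 := h1.closure hdVcont hW2cont
    rwa [closure_Ioo (by norm_num : (-1:ℝ) ≠ 1)] at h2
  -- ### nontriviality
  obtain ⟨δ, hδ0, hδneg⟩ := neg_near_zero' hf hf0 hf'0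
  have hne : ∃ x ∈ Ioo (-1:ℝ) 1, V x ≠ 0 := by
    by_contra hcon
    push_neg at hcon
    have hW10 : EqOn W1 (fun _ => (0:ℝ)) (Icc (-1:ℝ) 1) := by
      have h1 : EqOn W1 (fun _ => (0:ℝ)) (Ioo (-1:ℝ) 1) := fun x hx => by
        rw [← hVW1 x hx]; exact hcon x hx
      have h2 := h1.closure hW1cont continuous_const
      rwa [closure_Ioo (by norm_num : (-1:ℝ) ≠ 1)] at h2
    obtain ⟨j, hj⟩ := (Metric.tendstoUniformlyOn_iff.mp hU1 δ hδ0).exists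
    have hsmall : ∀ y ∈ Icc (-(Zn (φ j))) (Zn (φ j)), vn (φ j) y < δ := by
      intro y hy
      have hzpos := hZpos (φ j)
      have hxmem : y / Zn (φ j) ∈ Icc (-1:ℝ) 1 := by
        constructor
        · rw [le_div_iff₀ hzpos]; linarith [hy.1]
        · rw [div_le_one hzpos]; exact hy.2
      have hjx := hj _ hxmem
      rw [hW10 hxmem] at hjx
      have heq : Zn (φ j) * (y / Zn (φ j)) = y := by field_simp
      rw [heq] at hjx
      have h0 : 0 ≤ vn (φ j) y := (hv01 (φ j) y hy).1
      rwa [Real.dist_eq, zero_sub, abs_neg, abs_of_nonneg h0] at hjx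
    have hsc : StrictConvexOn ℝ (Icc (-(Zn (φ j))) (Zn (φ j))) (vn (φ j)) := by
      apply strictConvexOn_of_deriv2_pos (convex_Icc _ _) ((hvcont (φ j)).continuousOn)
      intro x hx
      rw [interior_Icc] at hx
      have hiter : deriv^[2] (vn (φ j)) = deriv (deriv (vn (φ j))) := rfl
      rw [hiter, hode' (φ j) x hx]
      have hpos := (hvn_pos (φ j) x hx).1
      have hlt : vn (φ j) x < δ := hsmall x (Ioo_subset_Icc_self hx)
      have := hδneg (vn (φ j) x) hpos hlt
      linarith
    have hzpos := hZpos (φ j)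
    have hmem1 : -(Zn (φ j)) ∈ Icc (-(Zn (φ j))) (Zn (φ j)) :=
      left_mem_Icc.mpr (by linarith)
    have hmem2 : Zn (φ j) ∈ Icc (-(Zn (φ j))) (Zn (φ j)) :=
      right_mem_Icc.mpr (by linarith)
    have hne' : -(Zn (φ j)) ≠ Zn (φ j) := by intro h; linarith [congrArg id h]
    have h2 := hsc.2 hmem1 hmem2 hne' (by norm_num : (0:ℝ) < 1/2)
      (by norm_num : (0:ℝ) < 1/2) (by norm_num)
    rw [(hvn_bc (φ j)).1, (hvn_bc (φ j)).2] at h2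
    simp only [smul_eq_mul] at h2
    have hmid : (1/2 : ℝ) * -(Zn (φ j)) + (1/2) * Zn (φ j) = 0 := by ring
    rw [hmid] at h2
    have hvn0 := (hvn_pos (φ j) 0 ⟨by linarith, hzpos⟩).1
    linarith
  -- ### positivity of V via Gronwall
  obtain ⟨L0, hL0⟩ := (isCompact_Icc (a := (-1:ℝ)) (b := 2)).exists_bound_of_continuousOn
    ((hf.continuous_deriv le_rfl).continuousOn)
  set L : ℝ := max L0 0 with hLdef
  have hL : ∀ s ∈ Icc (-1:ℝ) 2, |deriv f s| ≤ L := fun s hs => (hL0 s hs).trans (le_max_left _ _)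
  have hLnn : (0:ℝ) ≤ L := le_max_right _ _
  have hfL : ∀ s ∈ Icc (0:ℝ) 1, |f s| ≤ L * |s| := by
    intro s hs
    have hmem : s ∈ Icc (-1:ℝ) 2 := ⟨by linarith [hs.1], by linarith [hs.2]⟩
    have h0 : (0:ℝ) ∈ Icc (-1:ℝ) 2 := by norm_num
    have hmvt := Convex.norm_image_sub_le_of_norm_deriv_le (f := f)
      (fun x _ => (hf.differentiable one_ne_zero) x)
      (fun x hx => by rw [Real.norm_eq_abs]; exact hL x hx) (convex_Icc _ _) h0 hmem
    simpa [hf0] using hmvt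
  set Kc : ℝ := max 1 (ZB ^ 2 * L) with hKcdef
  have hKc1 : (1:ℝ) ≤ Kc := le_max_left _ _
  have hVnonneg : ∀ x ∈ Icc (-1:ℝ) 1, 0 ≤ V x := fun x hx => by
    rw [hVW1Icc hx]; exact (hW1mem x hx).1
  set uu : ℝ → ℝ × ℝ := fun t => (V t, deriv V t) with huudef
  have huu' : ∀ t, HasDerivAt uu (deriv V t, g t) t :=
    fun t => ((hVdiff t).hasDerivAt).prodMk (hV'' t)
  have huucont : Continuous uu :=
    (hVC2'.continuous).prodMk (Differentiable.continuous fun x => (hV'' x).differentiableAt)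
  have huubd : ∀ t ∈ Ioo (-1:ℝ) 1, ‖(deriv V t, g t)‖ ≤ Kc * ‖uu t‖ + 0 := by
    intro t ht
    rw [add_zero]
    have hn1 : ‖deriv V t‖ ≤ ‖uu t‖ := by
      rw [huudef, Prod.norm_def]; exact le_max_right _ _
    have hn0 : ‖V t‖ ≤ ‖uu t‖ := by
      rw [huudef, Prod.norm_def]; exact le_max_left _ _
    have hVt : V t ∈ Icc (0:ℝ) 1 := by
      rw [hVW1Icc (Ioo_subset_Icc_self ht)]
      exact hW1mem _ (Ioo_subset_Icc_self ht)
    have hgt : ‖g t‖ ≤ ZB ^ 2 * L * ‖V t‖ := by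
      rw [hgdef]
      simp only [norm_neg, Real.norm_eq_abs, abs_mul, abs_of_nonneg (sq_nonneg ZB)]
      rw [← hVW1 t ht]
      calc ZB ^ 2 * |f (V t)| ≤ ZB ^ 2 * (L * |V t|) :=
            mul_le_mul_of_nonneg_left (hfL _ hVt) (sq_nonneg ZB)
        _ = ZB ^ 2 * L * |V t| := by ring
    rw [Prod.norm_def]
    apply max_le
    · calc ‖deriv V t‖ ≤ ‖uu t‖ := hn1
        _ ≤ Kc * ‖uu t‖ := le_mul_of_one_le_left (norm_nonneg _) hKc1
    · calc ‖g t‖ ≤ ZB ^ 2 * L * ‖V t‖ := hgt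
        _ ≤ ZB ^ 2 * L * ‖uu t‖ := mul_le_mul_of_nonneg_left hn0 (by positivity)
        _ ≤ Kc * ‖uu t‖ := mul_le_mul_of_nonneg_right (le_max_right _ _) (norm_nonneg _)
  have hzero_prop : ∀ x₀ ∈ Ioo (-1:ℝ) 1, V x₀ = 0 → ∀ y ∈ Ioo (-1:ℝ) 1, V y = 0 := by
    intro x₀ hx₀ hVx₀ y hy
    have hdV0 : deriv V x₀ = 0 := by
      have hmin : IsLocalMin V x₀ := by
        apply Filter.eventually_of_mem (isOpen_Ioo.mem_nhds hx₀)
        intro z hz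
        rw [hVx₀]
        exact hVnonneg z (Ioo_subset_Icc_self hz)
      exact hmin.deriv_eq_zero
    have huux₀ : ‖uu x₀‖ ≤ 0 := by
      rw [huudef]
      simp [hVx₀, hdV0, Prod.norm_def]
    rcases le_total x₀ y with hxy | hxy
    · have key := norm_le_gronwallBound_of_norm_deriv_right_le (f := uu)
        (f' := fun t => (deriv V t, g t)) (δ := 0) (K := Kc) (ε := 0) (a := x₀) (b := y)
        (huucont.continuousOn) (fun t _ => (huu' t).hasDerivWithinAt) huux₀
        (fun t ht => huubd t ⟨lt_of_lt_of_le hx₀.1 ht.1, lt_trans ht.2 hy.2⟩)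
      have hval := key y ⟨hxy, le_rfl⟩
      rw [gronwallBound_ε0_δ0] at hval
      have h1 : ‖V y‖ ≤ ‖uu y‖ := by rw [huudef, Prod.norm_def]; exact le_max_left _ _
      have : ‖V y‖ ≤ 0 := h1.trans hval
      simpa using le_antisymm this (norm_nonneg _)
    · set ww : ℝ → ℝ × ℝ := fun t => uu (2 * x₀ - t) with hwwdef
      have hinner : ∀ t : ℝ, HasDerivAt (fun s : ℝ => 2 * x₀ - s) (-1) t := fun t => by
        exact ((hasDerivAt_const t (2 * x₀)).sub (hasDerivAt_id t)).congr_deriv (by norm_num)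
      have hww' : ∀ t, HasDerivAt ww ((-1 : ℝ) • (deriv V (2 * x₀ - t), g (2 * x₀ - t))) t := by
        intro t
        have := (huu' (2 * x₀ - t)).scomp t (hinner t)
        exact this
      have hwwbd : ∀ t ∈ Ico x₀ (2 * x₀ - y),
          ‖(-1 : ℝ) • (deriv V (2 * x₀ - t), g (2 * x₀ - t))‖ ≤ Kc * ‖ww t‖ + 0 := by
        intro t ht
        have hmem : 2 * x₀ - t ∈ Ioo (-1:ℝ) 1 := by
          constructor
          · have := ht.2; linarith [hy.1]
          · have := ht.1; linarith [hx₀.2]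
        have := huubd _ hmem
        rw [norm_smul]
        simpa [hwwdef] using this
      have key := norm_le_gronwallBound_of_norm_deriv_right_le (f := ww)
        (f' := fun t => (-1 : ℝ) • (deriv V (2 * x₀ - t), g (2 * x₀ - t)))
        (δ := 0) (K := Kc) (ε := 0) (a := x₀) (b := 2 * x₀ - y)
        ((huucont.comp (continuous_const.sub continuous_id)).continuousOn)
        (fun t _ => (hww' t).hasDerivWithinAt)
        (by
          have hwx : ww x₀ = uu x₀ := by simp only [hwwdef]; congr 1; ring
          rw [hwx]; exact huux₀)
        hwwbd
      have hval := key (2 * x₀ - y) ⟨by linarith, le_rfl⟩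
      rw [gronwallBound_ε0_δ0] at hval
      have hwy : ww (2 * x₀ - y) = uu y := by simp only [hwwdef]; congr 1; ring
      rw [hwy] at hval
      have h1 : ‖V y‖ ≤ ‖uu y‖ := by rw [huudef, Prod.norm_def]; exact le_max_left _ _
      have : ‖V y‖ ≤ 0 := h1.trans hval
      simpa using le_antisymm this (norm_nonneg _)
  have hVpos : ∀ x ∈ Ioo (-1:ℝ) 1, 0 < V x := by
    intro x hx
    rcases lt_or_eq_of_le (hVnonneg x (Ioo_subset_Icc_self hx)) with h | h
    · exact h
    · exfalso
      obtain ⟨z, hz, hzne⟩ := hne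
      exact hzne (hzero_prop x hx h.symm z hz)
  -- ### assembly
  have hZBne : ZB ≠ 0 := ne_of_gt hZB
  have hV1 : V 1 = 0 := by
    rw [hVW1Icc (right_mem_Icc.mpr (by norm_num))]
    exact hW1one
  have hVneg1 : V (-1) = 0 := by
    rw [hVW1Icc (left_mem_Icc.mpr (by norm_num))]
    exact hW1negone
  constructor
  · refine ⟨φ, hφ, V, hVC2', ?_, ?_, ?_, hV1, hVneg1, hne⟩
    · exact hU1.congr_right (fun x hx => (hVW1Icc hx).symm)
    · exact hU2.congr_right (fun x hx => (hdVW2Icc hx).symm)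
    · intro x hx
      refine ⟨?_, hVnonneg x (Ioo_subset_Icc_self hx)⟩
      rw [hddV, hgdef]
      simp only
      rw [← hVW1 x hx]
      ring
  · refine ⟨fun x => V (ZB⁻¹ * x), hVC2'.comp (contDiff_const.mul contDiff_id), ?_, ?_, ?_⟩
    · intro x hx
      have hy : ZB⁻¹ * x ∈ Ioo (-1:ℝ) 1 := by
        constructor
        · rw [show (-1:ℝ) = ZB⁻¹ * (-ZB) by field_simp]
          exact mul_lt_mul_of_pos_left hx.1 (inv_pos.mpr hZB)
        · rw [show (1:ℝ) = ZB⁻¹ * ZB by field_simp]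
          exact mul_lt_mul_of_pos_left hx.2 (inv_pos.mpr hZB)
      have hdVdiff : Differentiable ℝ (deriv V) := fun z => (hV'' z).differentiableAt
      have hd1 : deriv (fun y => V (ZB⁻¹ * y)) = fun y => ZB⁻¹ * deriv V (ZB⁻¹ * y) :=
        deriv_comp_const_mul' hVdiff ZB⁻¹
      have hd2 : deriv (deriv (fun y => V (ZB⁻¹ * y))) x
          = ZB⁻¹ * (ZB⁻¹ * deriv (deriv V) (ZB⁻¹ * x)) := by
        rw [hd1]
        rw [deriv_const_mul ZB⁻¹
          ((hasDerivAt_comp_const_mul' hdVdiff ZB⁻¹ x).differentiableAt)]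
        rw [deriv_comp_const_mul' hdVdiff ZB⁻¹]
      constructor
      · rw [hd2, hddV, hgdef]
        simp only
        rw [← hVW1 _ hy]
        field_simp
        ring
      · exact hVpos _ hy
    · show V (ZB⁻¹ * ZB) = 0
      rw [inv_mul_cancel₀ hZBne]
      exact hV1
    · show V (ZB⁻¹ * (-ZB)) = 0
      rw [show ZB⁻¹ * (-ZB) = (-1:ℝ) by field_simp]
      exact hVneg1
end
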